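/- arXiv:0805.0447 — 8 statements merged into one kernel-verified Lean document; each statement's English description precedes it below -/
import Mathlib

section
/- For independent nonnegative random variables X_1,...,X_n with finite means, if M_i denotes the expected value of the maximum of n independent copies of X_i, then E[max(X_1,...,X_n)] ≥ (M_1 + ... + M_n)/n. -/
/-!
Write `F i t = P (X i ≤ t)`. By independence the maximum `X_(n)` exceeds `t` with probability
`1 - ∏ i, F i t`, while the maximum of `n` independent copies of `X i` exceeds `t` with probability
`1 - F i t ^ n`. AM-GM gives `n * ∏ i, F i t ≤ ∑ i, F i t ^ n`, that is
`∑ i, (1 - F i t ^ n) ≤ n * (1 - ∏ i, F i t)`, and integrating over `t > 0` (layer-cake formula)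
turns this into `∑ i, M i ≤ n * E[X_(n)]`.
-/

open MeasureTheory ProbabilityTheory Set
open scoped ENNReal NNReal

theorem NNReal.card_mul_prod_le_sum_pow {ι : Type*} [Fintype ι] (a : ι → ℝ≥0) :
    Fintype.card ι * ∏ i, a i ≤ ∑ i, a i ^ Fintype.card ι := by
  set n := Fintype.card ι
  obtain hn | hn := eq_or_ne n 0
  · simp [hn]
  have amgm := NNReal.geom_mean_le_arith_mean_weighted Finset.univ (fun _ => (n : ℝ≥0)⁻¹)
    (fun i => a i ^ n) (by simp [n, hn])
  simp only [NNReal.coe_inv, NNReal.coe_natCast, NNReal.pow_rpow_inv_natCast _ hn,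
    ← Finset.mul_sum] at amgm
  calc n * ∏ i, a i ≤ n * ((n : ℝ≥0)⁻¹ * ∑ i, a i ^ n) := by gcongr
    _ = ∑ i, a i ^ n := by field_simp

theorem ENNReal.sum_one_sub_pow_card_le {ι : Type*} [Fintype ι] (a : ι → ℝ≥0∞)
    (ha : ∀ i, a i ≤ 1) :
    ∑ i, (1 - a i ^ Fintype.card ι) ≤ Fintype.card ι * (1 - ∏ i, a i) := by
  set n := Fintype.card ι
  -- adding `n * ∏ i, a i` to both sides cancels the truncated subtractions
  lift a to ι → ℝ≥0 using fun i => ne_top_of_le_ne_top one_ne_top (ha i)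
  have hprod : ∏ i, (a i : ℝ≥0∞) ≤ 1 := Finset.prod_le_one' fun i _ => ha i
  refine ENNReal.le_of_add_le_add_right (a := n * ∏ i, (a i : ℝ≥0∞))
    (mul_ne_top (natCast_ne_top n) (ne_top_of_le_ne_top one_ne_top hprod)) ?_
  calc ∑ i, (1 - (a i : ℝ≥0∞) ^ n) + n * ∏ i, (a i : ℝ≥0∞)
      ≤ ∑ i, (1 - (a i : ℝ≥0∞) ^ n) + ∑ i, (a i : ℝ≥0∞) ^ n := by
        gcongr
        exact_mod_cast NNReal.card_mul_prod_le_sum_pow a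
    _ = n := by
        rw [← Finset.sum_add_distrib]
        simp [tsub_add_cancel_of_le (pow_le_one' (ha _) _), n]
    _ = n * (1 - ∏ i, (a i : ℝ≥0∞)) + n * ∏ i, (a i : ℝ≥0∞) := by
        rw [← mul_add, tsub_add_cancel_of_le hprod, mul_one]

namespace MeasureTheory

theorem integral_le_toReal_lintegral_ofReal {α : Type*} [MeasurableSpace α] (μ : Measure α)
    (f : α → ℝ) : ∫ a, f a ∂μ ≤ (∫⁻ a, ENNReal.ofReal (f a) ∂μ).toReal := by
  by_cases hf : Integrable f μ
  · rw [integral_eq_lintegral_pos_part_sub_lintegral_neg_part hf]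
    exact sub_le_self _ ENNReal.toReal_nonneg
  · rw [integral_undef hf]
    exact ENNReal.toReal_nonneg

theorem lintegral_ofReal_eq_lintegral_meas_lt {α : Type*} [MeasurableSpace α] (μ : Measure α)
    {f : α → ℝ} (hf : AEMeasurable f μ) :
    ∫⁻ a, ENNReal.ofReal (f a) ∂μ = ∫⁻ t in Ioi 0, μ {a | t < f a} := by
  have hmax : ∫⁻ a, ENNReal.ofReal (f a) ∂μ = ∫⁻ a, ENNReal.ofReal (max (f a) 0) ∂μ := by
    simp
  rw [hmax, lintegral_eq_lintegral_meas_lt μ (f := fun a => max (f a) 0)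
    (ae_of_all _ fun a => le_max_right _ _) (hf.max aemeasurable_const)]
  refine setLIntegral_congr_fun measurableSet_Ioi fun t (ht : 0 < t) => ?_
  simp [ht.not_gt]

theorem measurable_measure_lt {α : Type*} [MeasurableSpace α] (μ : Measure α) (f : α → ℝ) :
    Measurable fun t => μ {a | t < f a} :=
  Antitone.measurable fun _ _ hst => measure_mono fun _ h => hst.trans_lt h

theorem integrable_iSup {α ι : Type*} [MeasurableSpace α] {μ : Measure α} [Fintype ι]
    [Nonempty ι] {f : ι → α → ℝ} (hf : ∀ i, Integrable (f i) μ) :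
    Integrable (fun a => ⨆ i, f i a) μ := by
  refine (integrable_finsetSum Finset.univ fun i _ => (hf i).abs).mono'
    (AEMeasurable.iSup fun i => (hf i).aemeasurable).aestronglyMeasurable
    (ae_of_all _ fun a => ?_)
  obtain ⟨i₀⟩ := ‹Nonempty ι›
  have hle (i : ι) : |f i a| ≤ ∑ j, |f j a| :=
    Finset.single_le_sum (fun j _ => abs_nonneg (f j a)) (Finset.mem_univ i)
  rw [Real.norm_eq_abs, abs_le]
  constructor
  · exact (neg_le_neg (hle i₀)).trans
      ((neg_abs_le _).trans (le_ciSup (finite_range fun i => f i a).bddAbove i₀))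
  · exact ciSup_le fun i => (le_abs_self _).trans (hle i)

end MeasureTheory

namespace ProbabilityTheory

variable {Ω ι : Type*} [MeasurableSpace Ω] {P : Measure Ω} [Fintype ι] [Nonempty ι]
  {X : ι → Ω → ℝ}

theorem iIndepFun.measure_iSup_le_eq_prod (hX : iIndepFun X P) (t : ℝ) :
    P {ω | ⨆ i, X i ω ≤ t} = ∏ i, P {ω | X i ω ≤ t} := by
  have hset : {ω | ⨆ i, X i ω ≤ t} = ⋂ i, X i ⁻¹' Iic t := by
    ext ω
    simpa using ciSup_le_iff (finite_range fun i => X i ω).bddAbove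
  rw [hset, hX.meas_iInter fun i => ⟨Iic t, measurableSet_Iic, rfl⟩]
  rfl

theorem iIndepFun.measure_lt_iSup_eq_one_sub_prod [IsProbabilityMeasure P]
    (hX : iIndepFun X P) (hXm : ∀ i, Measurable (X i)) (t : ℝ) :
    P {ω | t < ⨆ i, X i ω} = 1 - ∏ i, P {ω | X i ω ≤ t} := by
  have hcompl : {ω | t < ⨆ i, X i ω} = {ω | ⨆ i, X i ω ≤ t}ᶜ := by
    ext ω
    simp
  rw [hcompl, prob_compl_eq_one_sub (measurableSet_le (Measurable.iSup hXm) measurable_const),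
    hX.measure_iSup_le_eq_prod]

theorem measure_pi_lt_iSup_eq_one_sub_pow (μ : Measure ℝ) [IsProbabilityMeasure μ] (t : ℝ) :
    Measure.pi (fun _ : ι => μ) {v | t < ⨆ j, v j} = 1 - μ (Iic t) ^ Fintype.card ι := by
  have hindep : iIndepFun (fun j (v : ι → ℝ) => v j) (Measure.pi fun _ : ι => μ) :=
    iIndepFun_pi (X := fun _ => id) fun _ => aemeasurable_id
  have hmarginal (j : ι) : Measure.pi (fun _ : ι => μ) {v | v j ≤ t} = μ (Iic t) :=
    (measurePreserving_eval (fun _ : ι => μ) j).measure_preimage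
      measurableSet_Iic.nullMeasurableSet
  simp [hindep.measure_lt_iSup_eq_one_sub_prod measurable_pi_apply, hmarginal]

theorem iIndepFun.sum_measure_pi_map_lt_iSup_le [IsProbabilityMeasure P]
    (hX : iIndepFun X P) (hXm : ∀ i, Measurable (X i)) (t : ℝ) :
    ∑ i, Measure.pi (fun _ : ι => P.map (X i)) {v | t < ⨆ j, v j}
      ≤ Fintype.card ι * P {ω | t < ⨆ i, X i ω} := by
  have := fun i => Measure.isProbabilityMeasure_map (μ := P) (hXm i).aemeasurable
  simp_rw [measure_pi_lt_iSup_eq_one_sub_pow, Measure.map_apply (hXm _) measurableSet_Iic,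
    hX.measure_lt_iSup_eq_one_sub_prod hXm]
  exact ENNReal.sum_one_sub_pow_card_le _ fun i => prob_le_one

theorem iIndepFun.sum_lintegral_iSup_pi_map_le [IsProbabilityMeasure P]
    (hX : iIndepFun X P) (hXm : ∀ i, Measurable (X i)) :
    ∑ i, ∫⁻ v, ENNReal.ofReal (⨆ j, v j) ∂(Measure.pi fun _ : ι => P.map (X i))
      ≤ Fintype.card ι * ∫⁻ ω, ENNReal.ofReal (⨆ i, X i ω) ∂P := by
  have hsup : Measurable fun v : ι → ℝ => ⨆ j, v j := Measurable.iSup measurable_pi_apply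
  simp_rw [lintegral_ofReal_eq_lintegral_meas_lt _ hsup.aemeasurable,
    lintegral_ofReal_eq_lintegral_meas_lt _ (Measurable.iSup hXm).aemeasurable,
    ← lintegral_const_mul' _ _ (ENNReal.natCast_ne_top _)]
  rw [← lintegral_finsetSum _ fun i _ => measurable_measure_lt _ _]
  exact lintegral_mono (hX.sum_measure_pi_map_lt_iSup_le hXm)

end ProbabilityTheory

theorem stmt_0 {Ω : Type*} [MeasurableSpace Ω] (P : Measure Ω) [IsProbabilityMeasure P]
    (n : ℕ) (hn : 0 < n) (X : Fin n → Ω → ℝ)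
    (hmeas : ∀ i, Measurable (X i))
    (hnonneg : ∀ i ω, 0 ≤ X i ω)
    (hint : ∀ i, Integrable (X i) P)
    (hindep : iIndepFun X P)
    (M : Fin n → ℝ)
    (hM : ∀ i, M i =
      ∫ v, (⨆ j, v j) ∂(Measure.pi fun _ : Fin n => Measure.map (X i) P)) :
    (∑ i, M i) / n ≤ ∫ ω, ⨆ i, X i ω ∂P := by
  have : Nonempty (Fin n) := ⟨⟨0, hn⟩⟩
  set L := ∫⁻ ω, ENNReal.ofReal (⨆ i, X i ω) ∂P
  set Lcopies := fun i =>
    ∫⁻ v, ENNReal.ofReal (⨆ j, v j) ∂(Measure.pi fun _ : Fin n => P.map (X i))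
  have hsum : ∑ i, Lcopies i ≤ n * L := by
    simpa using hindep.sum_lintegral_iSup_pi_map_le hmeas
  have hL : ∫ ω, ⨆ i, X i ω ∂P = L.toReal :=
    integral_eq_lintegral_of_nonneg_ae
      (ae_of_all _ fun ω => Real.iSup_nonneg fun i => hnonneg i ω)
      (Measurable.iSup hmeas).aestronglyMeasurable
  have hnL : (n : ℝ≥0∞) * L ≠ ∞ :=
    ENNReal.mul_ne_top (ENNReal.natCast_ne_top n) (integrable_iSup hint).lintegral_lt_top.ne
  rw [div_le_iff₀ (Nat.cast_pos.2 hn), hL]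
  -- the maxima of the copies need not be known integrable: `hsum` makes each `Lcopies i` finite
  calc ∑ i, M i ≤ ∑ i, (Lcopies i).toReal :=
        Finset.sum_le_sum fun i _ => (hM i).trans_le (integral_le_toReal_lintegral_ofReal _ _)
    _ = (∑ i, Lcopies i).toReal := by
        refine (ENNReal.toReal_sum fun i _ => ne_top_of_le_ne_top hnL ?_).symm
        exact (Finset.single_le_sum (fun j _ => zero_le) (Finset.mem_univ i)).trans hsum
    _ ≤ (n * L).toReal := ENNReal.toReal_mono hnL hsum
    _ = L.toReal * n := by rw [ENNReal.toReal_mul, ENNReal.toReal_natCast, mul_comm]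
end

section
/- If X_1,...,X_n are independent nonnegative random variables with finite means such that M_i = M for all i (where M_i is the expected maximum of n i.i.d. copies of X_i), then M ≤ E[max(X_1,...,X_n)] ≤ (2 − 1/n)·M. -/
/-!
Write `F i` for the distribution function of `X i`. By the layer-cake formula and independence,
`E[max X] = ∫₀^∞ (1 - ∏ F i)`, while `M = ∫₀^∞ (1 - F i ^ n)` for every `i`.

The lower bound is AM-GM, `∏ F i ≤ (∑ F i ^ n) / n`, under the integral.

For the upper bound, `1 - ∏ F i` is at most `1` and at most `∑ (1 - F i)`, so
`E[max X] ≤ t + ∑ T i` with `T i = ∫_t^∞ (1 - F i)`, for every `t ≥ 0`. Splitting `M` at `t`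
and writing `c = 1 - F i t`, `G = ∑_{k<n} F i t ^ k` gives `G (t c + T i) ≤ M`, and
`n ≤ G (1 + (n - 1) c)`, hence `n (t c + T i) ≤ M (1 + (n - 1) c)`. For `t = (1 - 1/n) M`
the terms in `c` cancel, leaving `T i ≤ M / n`, whatever the jumps of `F i` at `t`.
-/

open MeasureTheory ProbabilityTheory Set Finset

lemma one_sub_pow_le_mul_one_sub {b : ℝ} (hb : -1 ≤ b) (n : ℕ) : 1 - b ^ n ≤ n * (1 - b) := by
  have := one_add_mul_le_pow (a := b - 1) (by linarith) n
  rw [add_sub_cancel] at this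
  linarith

lemma one_sub_mul_geom_sum_le {a b : ℝ} (ha : 0 ≤ a) (hab : a ≤ b) (hb : b ≤ 1) (n : ℕ) :
    (1 - b) * ∑ k ∈ range n, a ^ k ≤ 1 - b ^ n :=
  calc (1 - b) * ∑ k ∈ range n, a ^ k ≤ (1 - b) * ∑ k ∈ range n, b ^ k := by
        gcongr with k
    _ = 1 - b ^ n := by linear_combination (-1 : ℝ) * geom_sum_mul b n

lemma natCast_le_geom_sum_mul {a : ℝ} (ha : 0 ≤ a) (ha' : a ≤ 1) (n : ℕ) :
    (n : ℝ) ≤ (∑ k ∈ range n, a ^ k) * (1 + (n - 1) * (1 - a)) := by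
  have hle : ∀ m : ℕ, ∑ k ∈ range m, (1 - a ^ k) ≤ (m - 1) * (1 - a ^ m) := by
    intro m
    induction m with
    | zero => simp
    | succ m ih =>
      rw [sum_range_succ]
      have : a ^ (m + 1) ≤ a ^ m := pow_le_pow_of_le_one ha ha' m.le_succ
      have : (m : ℝ) * (1 - a ^ m) ≤ m * (1 - a ^ (m + 1)) := by gcongr
      push_cast
      linarith
  have hgeom : (1 - a) * ∑ k ∈ range n, a ^ k = 1 - a ^ n := by
    linear_combination (-1 : ℝ) * geom_sum_mul a n
  have hsum : ∑ k ∈ range n, (1 - a ^ k) = n - ∑ k ∈ range n, a ^ k := by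
    simp [sum_sub_distrib]
  have := hle n
  rw [hsum, ← hgeom] at this
  linarith

lemma one_sub_prod_le_sum_one_sub {ι : Type*} (s : Finset ι) {a : ι → ℝ}
    (h0 : ∀ i ∈ s, 0 ≤ a i) (h1 : ∀ i ∈ s, a i ≤ 1) :
    1 - ∏ i ∈ s, a i ≤ ∑ i ∈ s, (1 - a i) := by
  induction s using Finset.cons_induction with
  | empty => simp
  | cons j s _ ih =>
    rw [prod_cons, sum_cons]
    have hs := ih (fun i hi => h0 i (mem_cons_of_mem hi)) (fun i hi => h1 i (mem_cons_of_mem hi))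
    have hp0 : 0 ≤ ∏ i ∈ s, a i := prod_nonneg fun i hi => h0 i (mem_cons_of_mem hi)
    have hp1 : ∏ i ∈ s, a i ≤ 1 :=
      prod_le_one (fun i hi => h0 i (mem_cons_of_mem hi)) fun i hi => h1 i (mem_cons_of_mem hi)
    nlinarith [h0 j (mem_cons_self j s), h1 j (mem_cons_self j s)]

lemma prod_le_sum_pow_div {n : ℕ} (hn : 0 < n) {a : Fin n → ℝ} (h0 : ∀ i, 0 ≤ a i) :
    ∏ i, a i ≤ (∑ i, a i ^ n) / n := by
  have hn' : (n : ℝ) ≠ 0 := by positivity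
  have hamgm := Real.geom_mean_le_arith_mean_weighted univ (fun _ => 1 / (n : ℝ))
    (fun i => a i ^ n) (fun _ _ => by positivity) (by simp [hn'])
    (fun i _ => pow_nonneg (h0 i) n)
  convert hamgm using 1
  · refine prod_congr rfl fun i _ => ?_
    rw [← Real.rpow_natCast, ← Real.rpow_mul (h0 i), mul_one_div_cancel hn', Real.rpow_one]
  · rw [sum_div]
    exact sum_congr rfl fun i _ => by ring

section Survival

variable {F : ℝ → ℝ}

lemma integrableOn_one_sub_pow {s : Set ℝ} (hF : Monotone F) (h0 : ∀ x, 0 ≤ F x)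
    (h1 : ∀ x, F x ≤ 1) (hS : IntegrableOn (fun x => 1 - F x) s) (n : ℕ) :
    IntegrableOn (fun x => 1 - F x ^ n) s := by
  refine (hS.const_mul n).mono' ((hF.measurable.pow_const n).const_sub 1).aestronglyMeasurable
    (ae_of_all _ fun x => ?_)
  rw [Real.norm_eq_abs, abs_of_nonneg (sub_nonneg.2 (pow_le_one₀ (h0 x) (h1 x)))]
  exact one_sub_pow_le_mul_one_sub (by linarith [h0 x]) n

lemma geom_sum_mul_le_setIntegral_one_sub_pow (hF : Monotone F) (h0 : ∀ x, 0 ≤ F x)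
    (h1 : ∀ x, F x ≤ 1) (hS : IntegrableOn (fun x => 1 - F x) (Ioi 0)) {t : ℝ} (ht : 0 ≤ t)
    (n : ℕ) :
    (∑ k ∈ range n, F t ^ k) * (t * (1 - F t) + ∫ x in Ioi t, (1 - F x)) ≤
      ∫ x in Ioi 0, (1 - F x ^ n) := by
  have hP := integrableOn_one_sub_pow hF h0 h1 hS n
  have hhead : (∑ k ∈ range n, F t ^ k) * (t * (1 - F t)) ≤ ∫ x in Ioc 0 t, (1 - F x ^ n) := by
    calc (∑ k ∈ range n, F t ^ k) * (t * (1 - F t))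
        = (1 - F t ^ n) * volume.real (Ioc 0 t) := by
          rw [Real.volume_real_Ioc_of_le ht, sub_zero]
          linear_combination (-t) * geom_sum_mul (F t) n
      _ ≤ ∫ x in Ioc 0 t, (1 - F x ^ n) :=
          setIntegral_ge_of_const_le_real measurableSet_Ioc measure_Ioc_lt_top.ne
            (fun x hx => by gcongr; exacts [h0 x, hF hx.2])
            (hP.mono_set Ioc_subset_Ioi_self)
  have htail : (∑ k ∈ range n, F t ^ k) * ∫ x in Ioi t, (1 - F x) ≤
      ∫ x in Ioi t, (1 - F x ^ n) := by
    rw [← integral_const_mul]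
    refine setIntegral_mono_on ((hS.mono_set (Ioi_subset_Ioi ht)).const_mul _)
      (hP.mono_set (Ioi_subset_Ioi ht)) measurableSet_Ioi fun x hx => ?_
    rw [mul_comm]
    exact one_sub_mul_geom_sum_le (h0 t) (hF (le_of_lt hx)) (h1 x) n
  rw [← Ioc_union_Ioi_eq_Ioi ht, setIntegral_union (Ioc_disjoint_Ioi le_rfl) measurableSet_Ioi
    (hP.mono_set Ioc_subset_Ioi_self) (hP.mono_set (Ioi_subset_Ioi ht))]
  linarith

lemma setIntegral_one_sub_pow_nonneg (h0 : ∀ x, 0 ≤ F x) (h1 : ∀ x, F x ≤ 1) (n : ℕ) :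
    0 ≤ ∫ x in Ioi 0, (1 - F x ^ n) :=
  setIntegral_nonneg measurableSet_Ioi fun x _ => sub_nonneg.2 (pow_le_one₀ (h0 x) (h1 x))

lemma natCast_mul_setIntegral_one_sub_le (hF : Monotone F) (h0 : ∀ x, 0 ≤ F x)
    (h1 : ∀ x, F x ≤ 1) (hS : IntegrableOn (fun x => 1 - F x) (Ioi 0)) {n : ℕ} (hn : 0 < n)
    {m : ℝ} (hm : ∫ x in Ioi 0, (1 - F x ^ n) = m) :
    n * ∫ x in Ioi ((1 - 1 / n) * m), (1 - F x) ≤ m := by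
  set t := (1 - 1 / (n : ℝ)) * m
  have hn' : (1 : ℝ) ≤ n := by exact_mod_cast hn
  have hm0 : 0 ≤ m := hm ▸ setIntegral_one_sub_pow_nonneg h0 h1 n
  have hnt : n * t = (n - 1) * m := by simp only [t]; field_simp
  have ht : 0 ≤ t := mul_nonneg (by rw [sub_nonneg, div_le_one (by linarith)]; exact hn') hm0
  set c := 1 - F t
  set T := ∫ x in Ioi t, (1 - F x)
  set G := ∑ k ∈ range n, F t ^ k
  have hc0 : 0 ≤ c := sub_nonneg.2 (h1 t)
  have hT0 : 0 ≤ T := setIntegral_nonneg measurableSet_Ioi fun x _ => sub_nonneg.2 (h1 x)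
  have hG : G * (t * c + T) ≤ m := hm ▸ geom_sum_mul_le_setIntegral_one_sub_pow hF h0 h1 hS ht n
  have hnG : (n : ℝ) ≤ G * (1 + (n - 1) * c) := natCast_le_geom_sum_mul (h0 t) (h1 t) n
  have hlow := mul_le_mul_of_nonneg_right hnG (by positivity : 0 ≤ t * c + T)
  have hup := mul_le_mul_of_nonneg_right hG (by positivity : 0 ≤ 1 + (n - 1) * c)
  have hcancel : n * t * c = (n - 1) * m * c := by rw [hnt]
  linarith

end Survival

section Family

variable {ι : Type*} [Fintype ι] {F : ι → ℝ → ℝ}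

lemma integrableOn_one_sub_prod (hF : ∀ i, Monotone (F i)) (h0 : ∀ i x, 0 ≤ F i x)
    (h1 : ∀ i x, F i x ≤ 1) (hS : ∀ i, IntegrableOn (fun x => 1 - F i x) (Ioi 0)) :
    IntegrableOn (fun x => 1 - ∏ i, F i x) (Ioi 0) := by
  have hmeas : Measurable fun x => 1 - ∏ i, F i x :=
    measurable_const.sub (Finset.measurable_prod _ fun i _ => (hF i).measurable)
  refine (integrable_finsetSum univ fun i _ => hS i).mono' hmeas.aestronglyMeasurable
    (ae_of_all _ fun x => ?_)
  have hprod : ∏ i, F i x ≤ 1 := prod_le_one (fun i _ => h0 i x) fun i _ => h1 i x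
  rw [Real.norm_eq_abs, abs_of_nonneg (sub_nonneg.2 hprod)]
  simpa using one_sub_prod_le_sum_one_sub univ (fun i _ => h0 i x) fun i _ => h1 i x

lemma setIntegral_one_sub_prod_le (hF : ∀ i, Monotone (F i)) (h0 : ∀ i x, 0 ≤ F i x)
    (h1 : ∀ i x, F i x ≤ 1) (hS : ∀ i, IntegrableOn (fun x => 1 - F i x) (Ioi 0)) {t : ℝ}
    (ht : 0 ≤ t) :
    ∫ x in Ioi 0, (1 - ∏ i, F i x) ≤ t + ∑ i, ∫ x in Ioi t, (1 - F i x) := by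
  have hG := integrableOn_one_sub_prod hF h0 h1 hS
  have hStail : ∀ i, IntegrableOn (fun x => 1 - F i x) (Ioi t) :=
    fun i => (hS i).mono_set (Ioi_subset_Ioi ht)
  have hhead : ∫ x in Ioc 0 t, (1 - ∏ i, F i x) ≤ t := by
    calc ∫ x in Ioc 0 t, (1 - ∏ i, F i x) ≤ 1 * volume.real (Ioc 0 t) := by
          refine (Real.le_norm_self _).trans
            (norm_setIntegral_le_of_norm_le_const measure_Ioc_lt_top fun x _ => ?_)
          rw [Real.norm_eq_abs, abs_le]
          have : 0 ≤ ∏ i, F i x := prod_nonneg fun i _ => h0 i x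
          have : ∏ i, F i x ≤ 1 := prod_le_one (fun i _ => h0 i x) fun i _ => h1 i x
          constructor <;> linarith
      _ = t := by rw [Real.volume_real_Ioc_of_le ht, one_mul, sub_zero]
  have htail : ∫ x in Ioi t, (1 - ∏ i, F i x) ≤ ∑ i, ∫ x in Ioi t, (1 - F i x) := by
    rw [← integral_finsetSum _ fun i _ => hStail i]
    exact setIntegral_mono_on (hG.mono_set (Ioi_subset_Ioi ht))
      (integrable_finsetSum _ fun i _ => hStail i) measurableSet_Ioi
      fun x _ => one_sub_prod_le_sum_one_sub univ (fun i _ => h0 i x) fun i _ => h1 i x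
  rw [← Ioc_union_Ioi_eq_Ioi ht, setIntegral_union (Ioc_disjoint_Ioi le_rfl) measurableSet_Ioi
    (hG.mono_set Ioc_subset_Ioi_self) (hG.mono_set (Ioi_subset_Ioi ht))]
  linarith

end Family

section FinFamily

variable {n : ℕ} {F : Fin n → ℝ → ℝ}

lemma le_setIntegral_one_sub_prod (hn : 0 < n) (hF : ∀ i, Monotone (F i))
    (h0 : ∀ i x, 0 ≤ F i x) (h1 : ∀ i x, F i x ≤ 1)
    (hS : ∀ i, IntegrableOn (fun x => 1 - F i x) (Ioi 0)) {M : ℝ}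
    (hM : ∀ i, ∫ x in Ioi 0, (1 - F i x ^ n) = M) :
    M ≤ ∫ x in Ioi 0, (1 - ∏ i, F i x) := by
  have hP i := integrableOn_one_sub_pow (hF i) (h0 i) (h1 i) (hS i) n
  calc M = ∫ x in Ioi 0, (∑ i, (1 - F i x ^ n)) / n := by
        rw [integral_div, integral_finsetSum _ fun i _ => hP i]
        simp only [hM, sum_const, card_univ, Fintype.card_fin, nsmul_eq_mul]
        field_simp
    _ ≤ ∫ x in Ioi 0, (1 - ∏ i, F i x) := by
        refine setIntegral_mono_on ((integrable_finsetSum _ fun i _ => hP i).div_const _)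
          (integrableOn_one_sub_prod hF h0 h1 hS) measurableSet_Ioi fun x _ => ?_
        have := prod_le_sum_pow_div hn fun i => h0 i x
        calc (∑ i, (1 - F i x ^ n)) / n = 1 - (∑ i, F i x ^ n) / n := by
              simp only [sum_sub_distrib, sum_const, card_univ, Fintype.card_fin, nsmul_eq_mul,
                mul_one]
              field_simp
          _ ≤ 1 - ∏ i, F i x := by linarith

lemma setIntegral_one_sub_prod_le_of_forall_eq (hn : 0 < n) (hF : ∀ i, Monotone (F i))
    (h0 : ∀ i x, 0 ≤ F i x) (h1 : ∀ i x, F i x ≤ 1)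
    (hS : ∀ i, IntegrableOn (fun x => 1 - F i x) (Ioi 0)) {M : ℝ}
    (hM : ∀ i, ∫ x in Ioi 0, (1 - F i x ^ n) = M) :
    ∫ x in Ioi 0, (1 - ∏ i, F i x) ≤ (2 - 1 / n) * M := by
  have hn' : (1 : ℝ) ≤ n := by exact_mod_cast hn
  have hM0 : 0 ≤ M := hM ⟨0, hn⟩ ▸ setIntegral_one_sub_pow_nonneg (h0 _) (h1 _) n
  have ht : 0 ≤ (1 - 1 / (n : ℝ)) * M :=
    mul_nonneg (sub_nonneg.2 ((div_le_one (by linarith)).2 hn')) hM0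
  have htail i : ∫ x in Ioi ((1 - 1 / n) * M), (1 - F i x) ≤ M / n := by
    rw [le_div_iff₀ (by linarith), mul_comm]
    exact natCast_mul_setIntegral_one_sub_le (hF i) (h0 i) (h1 i) (hS i) hn (hM i)
  calc ∫ x in Ioi 0, (1 - ∏ i, F i x)
      ≤ (1 - 1 / n) * M + ∑ i, ∫ x in Ioi ((1 - 1 / n) * M), (1 - F i x) :=
        setIntegral_one_sub_prod_le hF h0 h1 hS ht
    _ ≤ (1 - 1 / n) * M + ∑ _i : Fin n, M / n := by gcongr with i; exact htail i
    _ = (2 - 1 / n) * M := by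
        simp only [sum_const, card_univ, Fintype.card_fin, nsmul_eq_mul]
        field_simp
        ring

end FinFamily

section LayerCake

variable {Ω : Type*} [MeasurableSpace Ω] {P : Measure Ω}

lemma integrableOn_measureReal_lt {f : Ω → ℝ} (hf : Integrable f P) (hnn : 0 ≤ᵐ[P] f) :
    IntegrableOn (fun t => P.real {ω | t < f ω}) (Ioi 0) := by
  refine integrable_toReal_of_lintegral_ne_top
    (Antitone.measurable (f := fun t => P {ω | t < f ω})
      fun a b hab => measure_mono fun ω h => hab.trans_lt h).aemeasurable ?_
  rw [← lintegral_eq_lintegral_meas_lt P hnn hf.aemeasurable]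
  exact hf.lintegral_lt_top.ne

variable [IsProbabilityMeasure P]

lemma cdf_map_eq {Y : Ω → ℝ} (hY : Measurable Y) (t : ℝ) :
    cdf (P.map Y) t = P.real (Y ⁻¹' Iic t) := by
  have := Measure.isProbabilityMeasure_map (μ := P) hY.aemeasurable
  rw [cdf_eq_real, map_measureReal_apply hY measurableSet_Iic]

lemma one_sub_cdf_map_eq {Y : Ω → ℝ} (hY : Measurable Y) (t : ℝ) :
    1 - cdf (P.map Y) t = P.real {ω | t < Y ω} := by
  rw [cdf_map_eq hY, ← probReal_compl_eq_one_sub (hY measurableSet_Iic)]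
  congr 1
  ext ω
  simp

lemma integrableOn_one_sub_cdf_map {Y : Ω → ℝ} (hY : Measurable Y) (hint : Integrable Y P)
    (hnn : 0 ≤ᵐ[P] Y) : IntegrableOn (fun t => 1 - cdf (P.map Y) t) (Ioi 0) := by
  simp_rw [one_sub_cdf_map_eq hY]
  exact integrableOn_measureReal_lt hint hnn

theorem iIndepFun.integral_iSup_eq {ι : Type*} [Fintype ι] [Nonempty ι] {X : ι → Ω → ℝ}
    (hindep : iIndepFun X P) (hX : ∀ i, Measurable (X i)) (hnn : ∀ i, 0 ≤ᵐ[P] X i)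
    (hint : ∀ i, Integrable (X i) P) :
    ∫ ω, ⨆ i, X i ω ∂P = ∫ t in Ioi 0, (1 - ∏ i, cdf (P.map (X i)) t) := by
  have hbdd (ω : Ω) : BddAbove (range fun i => X i ω) := (finite_range _).bddAbove
  have hnn' : ∀ᵐ ω ∂P, ∀ i, 0 ≤ X i ω := ae_all_iff.2 hnn
  have hsup_nn : 0 ≤ᵐ[P] fun ω => ⨆ i, X i ω := by
    filter_upwards [hnn'] with ω hω
    exact le_ciSup_of_le (hbdd ω) (Classical.arbitrary ι) (hω _)
  have hsup_int : Integrable (fun ω => ⨆ i, X i ω) P := by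
    refine (integrable_finsetSum univ fun i _ => hint i).mono'
      (Measurable.iSup hX).aestronglyMeasurable ?_
    filter_upwards [hnn', hsup_nn] with ω hω hω'
    rw [Real.norm_eq_abs, abs_of_nonneg hω']
    exact ciSup_le fun i => single_le_sum (fun j _ => hω j) (mem_univ i)
  rw [hsup_int.integral_eq_integral_meas_lt hsup_nn]
  refine setIntegral_congr_fun measurableSet_Ioi fun t _ => ?_
  have hset : {ω | t < ⨆ i, X i ω} = (⋂ i, X i ⁻¹' Iic t)ᶜ := by
    ext ω
    simp [lt_ciSup_iff (hbdd ω)]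
  have hmeas_iInter : MeasurableSet (⋂ i, X i ⁻¹' Iic t) :=
    MeasurableSet.iInter fun i => hX i measurableSet_Iic
  simp only [hset, probReal_compl_eq_one_sub hmeas_iInter, cdf_map_eq (hX _), measureReal_def,
    hindep.meas_iInter fun i => ⟨Iic t, measurableSet_Iic, rfl⟩, ENNReal.toReal_prod]

lemma integral_iSup_pi_eq {ι : Type*} [Fintype ι] [Nonempty ι] (μ : Measure ℝ)
    [IsProbabilityMeasure μ] (hnn : ∀ᵐ x ∂μ, 0 ≤ x) (hint : Integrable id μ) :
    ∫ v, (⨆ j, v j) ∂(Measure.pi fun _ : ι => μ) =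
      ∫ t in Ioi 0, (1 - cdf μ t ^ Fintype.card ι) := by
  have heval (j : ι) := measurePreserving_eval (fun _ : ι => μ) j
  have hnn' (j : ι) : 0 ≤ᵐ[Measure.pi fun _ : ι => μ] fun v => v j :=
    (heval j).quasiMeasurePreserving.ae hnn
  refine (iIndepFun.integral_iSup_eq (X := fun j (v : ι → ℝ) => v j)
    (iIndepFun_pi (X := fun _ => id) fun _ => aemeasurable_id) (fun j => measurable_pi_apply j)
    hnn' (fun j => (heval j).integrable_comp_of_integrable hint)).trans ?_
  simp [(heval _).map_eq]

end LayerCake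

theorem stmt_2 {Ω : Type*} [MeasurableSpace Ω] (P : Measure Ω) [IsProbabilityMeasure P]
    (n : ℕ) (hn : 0 < n) (X : Fin n → Ω → ℝ)
    (hmeas : ∀ i, Measurable (X i))
    (hnonneg : ∀ i ω, 0 ≤ X i ω)
    (hint : ∀ i, Integrable (X i) P)
    (hindep : iIndepFun X P)
    (M : ℝ)
    (hM : ∀ i, M =
      ∫ v, (⨆ j, v j) ∂(Measure.pi fun _ : Fin n => Measure.map (X i) P)) :
    M ≤ ∫ ω, ⨆ i, X i ω ∂P ∧ ∫ ω, ⨆ i, X i ω ∂P ≤ (2 - 1 / (n : ℝ)) * M := by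
  have : Nonempty (Fin n) := ⟨⟨0, hn⟩⟩
  set F : Fin n → ℝ → ℝ := fun i => cdf (P.map (X i))
  have hF i : Monotone (F i) := (cdf _).mono
  have h0 i x : 0 ≤ F i x := cdf_nonneg _ x
  have h1 i x : F i x ≤ 1 := cdf_le_one _ x
  have hnn i : 0 ≤ᵐ[P] X i := ae_of_all _ (hnonneg i)
  have hS i := integrableOn_one_sub_cdf_map (hmeas i) (hint i) (hnn i)
  have hMF i : ∫ x in Ioi 0, (1 - F i x ^ n) = M := by
    have := Measure.isProbabilityMeasure_map (μ := P) (hmeas i).aemeasurable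
    rw [hM i, integral_iSup_pi_eq _
      ((ae_map_iff (hmeas i).aemeasurable measurableSet_Ici).2 (hnn i))
      ((integrable_map_measure aestronglyMeasurable_id (hmeas i).aemeasurable).2 (hint i)),
      Fintype.card_fin]
  rw [iIndepFun.integral_iSup_eq hindep hmeas hnn hint]
  exact ⟨le_setIntegral_one_sub_prod hn hF h0 h1 hS hMF,
    setIntegral_one_sub_prod_le_of_forall_eq hn hF h0 h1 hS hMF⟩
end

section
/- If X_1,...,X_n are independent random variables each taking values in [0,b], and M_i is the expected maximum of n i.i.d. copies of X_i, then E[max(X_1,...,X_n)] ≥ b − ∏_{i=1}^n (b − M_i)^{1/n}. -/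
/-!
For a random variable `Y` with values in `[0, b]`, the layer-cake formula gives
`E Y = b - ∫₀ᵇ P(Y < t) dt`. Put `Fᵢ(t) = P(Xᵢ < t)`. By independence the maximum of the `Xᵢ`
satisfies `P(max Xᵢ < t) = ∏ Fᵢ(t)`, while the maximum of `n` i.i.d. copies of `Xᵢ` has
`P(max < t) = Fᵢ(t)ⁿ`, so that `b - Mᵢ = ∫₀ᵇ Fᵢⁿ`. The theorem is then the generalized Hölder
inequality `∫₀ᵇ ∏ Fᵢ ≤ ∏ (∫₀ᵇ Fᵢⁿ)^(1/n)` with all `n` exponents equal to `n`.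
-/

open MeasureTheory ProbabilityTheory Set

theorem ciSup_lt_iff_of_finite {ι α : Type*} [Finite ι] [Nonempty ι]
    [ConditionallyCompleteLinearOrder α] {f : ι → α} {a : α} :
    (⨆ i, f i) < a ↔ ∀ i, f i < a := by
  obtain ⟨j, hj⟩ := exists_eq_ciSup_of_finite (f := f)
  exact ⟨fun h i => lt_of_le_of_lt (le_ciSup (finite_range f).bddAbove i) h, fun h => hj ▸ h j⟩

theorem ciSup_mem_of_finite {ι α : Type*} [Finite ι] [Nonempty ι]
    [ConditionallyCompleteLinearOrder α] {f : ι → α} {s : Set α} (h : ∀ i, f i ∈ s) :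
    (⨆ i, f i) ∈ s := by
  obtain ⟨j, hj⟩ := exists_eq_ciSup_of_finite (f := f)
  exact hj ▸ h j

section LayerCake

variable {Ω : Type*} [MeasurableSpace Ω]

theorem monotone_measureReal_lt (ν : Measure Ω) [IsFiniteMeasure ν] (Y : Ω → ℝ) :
    Monotone fun t => ν.real {ω | Y ω < t} :=
  fun _ _ hst => measureReal_mono fun _ h => lt_of_lt_of_le h hst

theorem integral_eq_sub_integral_measureReal_lt (ν : Measure Ω) [IsProbabilityMeasure ν]
    {Y : Ω → ℝ} {b : ℝ} (hY : Measurable Y) (hYb : ∀ᵐ ω ∂ν, Y ω ∈ Icc 0 b) :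
    ∫ ω, Y ω ∂ν = b - ∫ t in Ioc 0 b, ν.real {ω | Y ω < t} := by
  have hb : 0 ≤ b := by
    obtain ⟨ω, hω⟩ := hYb.exists
    exact hω.1.trans hω.2
  have hcompl : ∀ t, ν.real {ω | t ≤ Y ω} = 1 - ν.real {ω | Y ω < t} := fun t => by
    have hset : {ω | t ≤ Y ω} = (Y ⁻¹' Iio t)ᶜ := by
      ext ω
      simp
    rw [hset, probReal_compl_eq_one_sub (hY measurableSet_Iio)]
    rfl
  rw [(Integrable.of_mem_Icc 0 b hY.aemeasurable hYb).integral_eq_integral_Ioc_meas_le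
    (hYb.mono fun _ h => h.1) (hYb.mono fun _ h => h.2)]
  simp_rw [hcompl]
  rw [integral_sub (integrable_const 1) ((monotone_measureReal_lt ν Y).intervalIntegrable).1,
    setIntegral_const, Real.volume_real_Ioc_of_le hb, smul_eq_mul, mul_one, sub_zero]

end LayerCake

theorem ProbabilityTheory.iIndepFun.measureReal_iSup_lt {Ω ι : Type*} [MeasurableSpace Ω]
    {P : Measure Ω} [Fintype ι] [Nonempty ι] {X : ι → Ω → ℝ} (hX : iIndepFun X P) (t : ℝ) :
    P.real {ω | (⨆ i, X i ω) < t} = ∏ i, P.real {ω | X i ω < t} := by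
  have hset : {ω | (⨆ i, X i ω) < t} = ⋂ i, X i ⁻¹' Iio t := by
    ext ω
    simp [ciSup_lt_iff_of_finite]
  rw [hset, measureReal_def, hX.meas_iInter fun i => ⟨Iio t, measurableSet_Iio, rfl⟩,
    ENNReal.toReal_prod]
  rfl

theorem ProbabilityTheory.iIndepFun.integral_iSup_eq_sub {Ω ι : Type*} [MeasurableSpace Ω]
    {P : Measure Ω} [IsProbabilityMeasure P] [Fintype ι] [Nonempty ι] {X : ι → Ω → ℝ}
    (hX : iIndepFun X P) (hmeas : ∀ i, Measurable (X i)) {b : ℝ} (hXb : ∀ i, ∀ᵐ ω ∂P, X i ω ∈ Icc 0 b) :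
    ∫ ω, ⨆ i, X i ω ∂P = b - ∫ t in Ioc 0 b, ∏ i, P.real {ω | X i ω < t} := by
  have hmax : ∀ᵐ ω ∂P, (⨆ i, X i ω) ∈ Icc 0 b := by
    filter_upwards [ae_all_iff.2 hXb] with ω hω using ciSup_mem_of_finite hω
  rw [integral_eq_sub_integral_measureReal_lt P (Measurable.iSup hmeas) hmax]
  simp_rw [hX.measureReal_iSup_lt]

theorem integral_iSup_pi_eq_sub {ι : Type*} [Fintype ι] [Nonempty ι] (μ : Measure ℝ)
    [IsProbabilityMeasure μ] {b : ℝ} (hμb : ∀ᵐ x ∂μ, x ∈ Icc 0 b) :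
    ∫ v, ⨆ j, v j ∂(Measure.pi fun _ : ι => μ) =
      b - ∫ t in Ioc 0 b, μ.real (Iio t) ^ Fintype.card ι := by
  have hindep : iIndepFun (fun j (v : ι → ℝ) => v j) (Measure.pi fun _ => μ) :=
    iIndepFun_pi (X := fun _ => id) fun _ => aemeasurable_id
  rw [hindep.integral_iSup_eq_sub measurable_pi_apply
    fun _ => Measure.tendsto_eval_ae_ae.eventually hμb]
  have hmarg : ∀ j t, (Measure.pi fun _ : ι => μ).real {v | v j < t} = μ.real (Iio t) :=
    fun j _ => (measurePreserving_eval _ j).measureReal_preimage measurableSet_Iio.nullMeasurableSet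
  simp_rw [hmarg, Finset.prod_const, Finset.card_univ]

theorem integral_prod_le_prod_integral_pow_inv {α ι : Type*} [MeasurableSpace α]
    {μ : Measure α} [Fintype ι] [Nonempty ι] {f : ι → α → ℝ} (hf : ∀ i, 0 ≤ f i)
    (hfi : ∀ i, Integrable (fun a => f i a ^ Fintype.card ι) μ) :
    ∫ a, ∏ i, f i a ∂μ ≤ ∏ i, (∫ a, f i a ^ Fintype.card ι ∂μ) ^ (Fintype.card ι : ℝ)⁻¹ := by
  set n := Fintype.card ι
  have hn : n ≠ 0 := Fintype.card_ne_zero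
  have hrhs : 0 ≤ ∏ i, (∫ a, f i a ^ n ∂μ) ^ (n : ℝ)⁻¹ :=
    Finset.prod_nonneg fun i _ =>
      Real.rpow_nonneg (integral_nonneg fun a => pow_nonneg (hf i a) n) _
  by_cases hint : Integrable (fun a => ∏ i, f i a) μ
  swap
  · rwa [integral_undef hint]
  have holder := ENNReal.lintegral_prod_norm_pow_le (μ := μ) Finset.univ
    (f := fun i a => ENNReal.ofReal (f i a ^ n)) (fun i _ => (hfi i).aemeasurable.ennreal_ofReal)
    (p := fun _ => (n : ℝ)⁻¹) (by simp [n, hn]) (fun _ _ => by positivity)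
  rw [← ENNReal.ofReal_le_ofReal_iff hrhs,
    ofReal_integral_eq_lintegral_ofReal hint
      (ae_of_all _ fun a => Finset.prod_nonneg fun i _ => hf i a),
    ENNReal.ofReal_prod_of_nonneg fun i _ =>
      Real.rpow_nonneg (integral_nonneg fun a => pow_nonneg (hf i a) n) _]
  calc ∫⁻ a, ENNReal.ofReal (∏ i, f i a) ∂μ
      = ∫⁻ a, ∏ i, ENNReal.ofReal (f i a ^ n) ^ (n : ℝ)⁻¹ ∂μ := by
        simp_rw [ENNReal.ofReal_prod_of_nonneg (fun i _ => hf i _),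
          ENNReal.ofReal_pow (hf _ _), ENNReal.pow_rpow_inv_natCast hn]
    _ ≤ ∏ i, (∫⁻ a, ENNReal.ofReal (f i a ^ n) ∂μ) ^ (n : ℝ)⁻¹ := holder
    _ = ∏ i, ENNReal.ofReal ((∫ a, f i a ^ n ∂μ) ^ (n : ℝ)⁻¹) :=
        Finset.prod_congr rfl fun i _ => by
          rw [← ENNReal.ofReal_rpow_of_nonneg (integral_nonneg fun a => pow_nonneg (hf i a) n)
            (by positivity), ofReal_integral_eq_lintegral_ofReal (hfi i)
            (ae_of_all _ fun a => pow_nonneg (hf i a) n)]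

theorem stmt_8_general {Ω : Type*} [MeasurableSpace Ω] (P : Measure Ω) [IsProbabilityMeasure P]
    (n : ℕ) (hn : 0 < n) (b : ℝ) (X : Fin n → Ω → ℝ)
    (hmeas : ∀ i, Measurable (X i))
    (hbound : ∀ i ω, X i ω ∈ Set.Icc 0 b)
    (hindep : iIndepFun X P)
    (M : Fin n → ℝ)
    (hM : ∀ i, M i =
      ∫ v, (⨆ j, v j) ∂(Measure.pi fun _ : Fin n => Measure.map (X i) P)) :
    b - ∏ i, (b - M i) ^ ((n : ℝ)⁻¹) ≤ ∫ ω, ⨆ i, X i ω ∂P := by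
  have : Nonempty (Fin n) := ⟨⟨0, hn⟩⟩
  set F : Fin n → ℝ → ℝ := fun i t => P.real {ω | X i ω < t}
  have hF_pow : ∀ i, b - M i = ∫ t in Ioc 0 b, F i t ^ n := fun i => by
    have := Measure.isProbabilityMeasure_map (μ := P) (hmeas i).aemeasurable
    have hlaw : ∀ᵐ x ∂P.map (X i), x ∈ Icc 0 b :=
      (ae_map_iff (hmeas i).aemeasurable measurableSet_Icc).2 (ae_of_all _ (hbound i))
    rw [hM i, integral_iSup_pi_eq_sub _ hlaw, Fintype.card_fin, sub_sub_cancel]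
    simp_rw [map_measureReal_apply (hmeas i) measurableSet_Iio]
    rfl
  have hF_int : ∀ i, IntegrableOn (fun t => F i t ^ n) (Ioc 0 b) := fun i => by
    have hmono : Monotone fun t => F i t ^ n := fun s t hst =>
      pow_le_pow_left₀ measureReal_nonneg (monotone_measureReal_lt P (X i) hst) n
    exact hmono.intervalIntegrable.1
  have holder := integral_prod_le_prod_integral_pow_inv (f := F)
    (fun i t => measureReal_nonneg) fun i => by rw [Fintype.card_fin]; exact hF_int i
  rw [hindep.integral_iSup_eq_sub hmeas fun i => ae_of_all _ (hbound i)]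
  simp only [Fintype.card_fin, ← hF_pow] at holder
  linarith

theorem stmt_8 {Ω : Type*} [MeasurableSpace Ω] (P : Measure Ω) [IsProbabilityMeasure P]
    (n : ℕ) (hn : 0 < n) (b : ℝ) (hb : 0 < b) (X : Fin n → Ω → ℝ)
    (hmeas : ∀ i, Measurable (X i))
    (hbound : ∀ i ω, X i ω ∈ Set.Icc 0 b)
    (hindep : iIndepFun X P)
    (M : Fin n → ℝ)
    (hM : ∀ i, M i =
      ∫ v, (⨆ j, v j) ∂(Measure.pi fun _ : Fin n => Measure.map (X i) P)) :
    b - ∏ i, (b - M i) ^ ((n : ℝ)⁻¹) ≤ ∫ ω, ⨆ i, X i ω ∂P :=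
  stmt_8_general P n hn b X hmeas hbound hindep M hM
end

section
/- For fixed u > v > 0 and integer n ≥ 2, the function φ(p) = u·p + v·(1−p)/(1−p^n) on [0,1) (extended at p=1 by continuity with value u + v/n) is increasing, with φ(0) = v and φ(1) = u + v/n. -/
/-!
Since `1 - p ^ n = (1 - p) * S p` with `S p = ∑ i < n, p ^ i`, on `[0, 1]` we have
`φ p = (u - v) * p + v * (p + (S p)⁻¹)`, the value `u + v / n` at `p = 1` included.
As `u - v > 0` and `v > 0`, it suffices that `p ↦ p + (S p)⁻¹` is monotone for `p ≥ 0`, i.e. that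
`S q - S p ≤ (q - p) * S p * S q` for `0 ≤ p ≤ q`. This follows by induction on `n` from
`S (n + 1) x = 1 + x * S n x`.
-/

open Finset

section GeomSum

variable {R : Type*}

lemma geom_sum_sub_geom_sum_le [CommRing R] [LinearOrder R] [IsStrictOrderedRing R]
    {p q : R} (hp : 0 ≤ p) (hpq : p ≤ q) (n : ℕ) :
    ∑ i ∈ range n, q ^ i - ∑ i ∈ range n, p ^ i ≤
      (q - p) * (∑ i ∈ range n, p ^ i) * ∑ i ∈ range n, q ^ i := by
  induction n with
  | zero => simp
  | succ n ih =>
    set Sp := ∑ i ∈ range n, p ^ i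
    set Sq := ∑ i ∈ range n, q ^ i
    have hq : 0 ≤ q := hp.trans hpq
    have hSq : 0 ≤ Sq := sum_nonneg fun i _ ↦ pow_nonneg hq i
    have hSq_le : Sq ≤ ∑ i ∈ range (n + 1), q ^ i := by
      rw [geom_sum_succ']
      exact le_add_of_nonneg_left (pow_nonneg hq n)
    calc ∑ i ∈ range (n + 1), q ^ i - ∑ i ∈ range (n + 1), p ^ i
        = (q - p) * Sq + p * (Sq - Sp) := by rw [geom_sum_succ, geom_sum_succ]; ring
      _ ≤ (q - p) * Sq + p * ((q - p) * Sp * Sq) := by gcongr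
      _ = (q - p) * (p * Sp + 1) * Sq := by ring
      _ = (q - p) * (∑ i ∈ range (n + 1), p ^ i) * Sq := by rw [geom_sum_succ]
      _ ≤ (q - p) * (∑ i ∈ range (n + 1), p ^ i) * ∑ i ∈ range (n + 1), q ^ i := by
        gcongr

lemma monotoneOn_add_inv_geom_sum [Field R] [LinearOrder R] [IsStrictOrderedRing R]
    {n : ℕ} (hn : n ≠ 0) :
    MonotoneOn (fun p : R ↦ p + (∑ i ∈ range n, p ^ i)⁻¹) (Set.Ici 0) := by
  intro p hp q hq hpq
  have hSp := geom_sum_pos (Set.mem_Ici.mp hp) hn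
  have hSq := geom_sum_pos (Set.mem_Ici.mp hq) hn
  have key : (∑ i ∈ range n, p ^ i)⁻¹ - (∑ i ∈ range n, q ^ i)⁻¹ ≤ q - p := by
    rw [inv_sub_inv hSp.ne' hSq.ne', div_le_iff₀ (mul_pos hSp hSq), ← mul_assoc]
    exact geom_sum_sub_geom_sum_le hp hpq n
  dsimp only
  linarith

lemma one_sub_div_one_sub_pow [Field R] {p : R} (hp : p ≠ 1) (n : ℕ) :
    (1 - p) / (1 - p ^ n) = (∑ i ∈ range n, p ^ i)⁻¹ := by
  rw [← mul_neg_geom_sum, div_mul_cancel_left₀ (sub_ne_zero.mpr hp.symm)]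

end GeomSum

theorem stmt_11 (n : ℕ) (hn : 2 ≤ n) (u v : ℝ) (hv : 0 < v) (huv : v < u)
    (φ : ℝ → ℝ)
    (hφ : ∀ p ∈ Set.Ico (0 : ℝ) 1, φ p = u * p + v * (1 - p) / (1 - p ^ n))
    (hφ1 : φ 1 = u + v / n) :
    MonotoneOn φ (Set.Icc 0 1) ∧ φ 0 = v ∧ φ 1 = u + v / n := by
  have hφ_eq : Set.EqOn (fun p ↦ (u - v) * p + v * (p + (∑ i ∈ range n, p ^ i)⁻¹)) φ
      (Set.Icc 0 1) := by
    rintro p ⟨hp0, hp1⟩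
    rcases hp1.lt_or_eq with hp1 | rfl
    · rw [hφ p ⟨hp0, hp1⟩, mul_div_assoc, one_sub_div_one_sub_pow hp1.ne]
      ring
    · simp only [hφ1, one_pow, sum_const, card_range, nsmul_eq_mul, mul_one]
      ring
  have hmono : MonotoneOn φ (Set.Icc 0 1) := by
    intro p hp q hq hpq
    rw [← hφ_eq hp, ← hφ_eq hq]
    have h := monotoneOn_add_inv_geom_sum (R := ℝ) (n := n) (by omega) hp.1 hq.1 hpq
    dsimp only at h ⊢
    linarith [mul_le_mul_of_nonneg_left h hv.le,
      mul_le_mul_of_nonneg_left hpq (sub_nonneg.mpr huv.le)]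
  refine ⟨hmono, ?_, hφ1⟩
  rw [hφ 0 ⟨le_rfl, zero_lt_one⟩, zero_pow (by omega)]
  ring
end

section
/- Let X and X' be random variables with X taking values x with probability 1−p and 0 with probability p, and let Y be an independent nonnegative random variable with Y < x almost surely; write M = E[max of n i.i.d. copies of X] = (1−p^n)x and suppose E[Y] > M. Then E[max(X, Y)] = p·E[Y] + (1−p)·x ≤ E[Y] + M/n. -/
/-!
On `{X = 0}` the maximum is `Y`, and on `{X = x}` it is `x` because `Y < x`; hence
`max X Y = x + 1{X = 0} (Y - x)` almost surely, and independence gives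
`E[max X Y] = x + p (E[Y] - x)`. For the bound, `E[Y] > M = (1 - p^n) x` gives
`(1 - p)(x - E[Y]) ≤ (1 - p) p^n x`, and `n (1 - p) p^n ≤ (1 - p)(1 + p + ⋯ + p^(n-1)) = 1 - p^n`.
-/

open MeasureTheory ProbabilityTheory

section

variable {Ω : Type*} [MeasurableSpace Ω] {P : Measure Ω} {X : Ω → ℝ} {p x : ℝ}

theorem ae_eq_zero_or_eq_of_map_eq (hX : Measurable X)
    (hlaw : P.map X =
      ENNReal.ofReal p • Measure.dirac 0 + ENNReal.ofReal (1 - p) • Measure.dirac x) :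
    ∀ᵐ ω ∂P, X ω = 0 ∨ X ω = x := by
  have hs : MeasurableSet {y : ℝ | y = 0 ∨ y = x} :=
    (measurableSet_singleton 0).union (measurableSet_singleton x)
  refine (ae_map_iff hX.aemeasurable hs).mp ?_
  rw [hlaw, ae_add_measure_iff]
  exact ⟨Measure.ae_smul_measure ((ae_dirac_iff hs).mpr (Or.inl rfl)) _,
    Measure.ae_smul_measure ((ae_dirac_iff hs).mpr (Or.inr rfl)) _⟩

theorem measureReal_preimage_zero_of_map_eq (hX : Measurable X) (hp : 0 ≤ p) (hx : x ≠ 0)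
    (hlaw : P.map X =
      ENNReal.ofReal p • Measure.dirac 0 + ENNReal.ofReal (1 - p) • Measure.dirac x) :
    P.real (X ⁻¹' {0}) = p := by
  rw [measureReal_def, ← Measure.map_apply hX (measurableSet_singleton 0), hlaw]
  simp [hx.symm, hp]

theorem ProbabilityTheory.IndepFun.integral_indicator_preimage [IsProbabilityMeasure P]
    {Y : Ω → ℝ} (hXY : IndepFun X Y P) (hX : Measurable X) (hY : Integrable Y P) {s : Set ℝ}
    (hs : MeasurableSet s) :
    ∫ ω, (X ⁻¹' s).indicator Y ω ∂P = P.real (X ⁻¹' s) * ∫ ω, Y ω ∂P := by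
  let I : Ω → ℝ := (X ⁻¹' s).indicator 1
  have hind : IndepFun I Y P := by
    have hcomp : s.indicator 1 ∘ X = I := by
      ext ω; exact (Set.indicator_comp_right (f := X) (s := s) (g := 1)).symm
    rw [← hcomp]; exact hXY.comp (measurable_one.indicator hs) measurable_id
  have hint : Integrable I P := (integrable_const 1).indicator (hX hs)
  calc ∫ ω, (X ⁻¹' s).indicator Y ω ∂P = ∫ ω, (I * Y) ω ∂P := by
        congr 1; ext ω
        simp only [I, Pi.mul_apply, ← Set.indicator_mul_left, Pi.one_apply, one_mul]
    _ = _ := by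
        rw [hind.integral_mul_eq_mul_integral hint.aestronglyMeasurable hY.aestronglyMeasurable,
          integral_indicator_one (hX hs)]

theorem natCast_mul_one_sub_mul_pow_le_one_sub_pow (n : ℕ) (hp : 0 ≤ p) (hp1 : p ≤ 1) :
    n * ((1 - p) * p ^ n) ≤ 1 - p ^ n := by
  have hsum : n * p ^ n ≤ ∑ i ∈ Finset.range n, p ^ i := by
    simpa using Finset.card_nsmul_le_sum (Finset.range n) (p ^ ·) (p ^ n)
      fun i hi => pow_le_pow_of_le_one hp hp1 (Finset.mem_range.mp hi).le
  calc n * ((1 - p) * p ^ n) = (1 - p) * (n * p ^ n) := by ring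
    _ ≤ (1 - p) * ∑ i ∈ Finset.range n, p ^ i := by gcongr
    _ = 1 - p ^ n := by rw [mul_comm, geom_sum_mul_neg]

theorem integral_max_of_map_eq [IsProbabilityMeasure P] {Y : Ω → ℝ} (hX : Measurable X)
    (hp : 0 ≤ p) (hx : x ≠ 0)
    (hlaw : P.map X =
      ENNReal.ofReal p • Measure.dirac 0 + ENNReal.ofReal (1 - p) • Measure.dirac x)
    (hY : ∀ᵐ ω ∂P, 0 ≤ Y ω ∧ Y ω < x) (hYint : Integrable Y P) (hXY : IndepFun X Y P) :
    ∫ ω, max (X ω) (Y ω) ∂P = p * ∫ ω, Y ω ∂P + (1 - p) * x := by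
  have hmax : (fun ω => max (X ω) (Y ω)) =ᵐ[P]
      fun ω => x + (X ⁻¹' {0}).indicator (fun ω => Y ω - x) ω := by
    filter_upwards [ae_eq_zero_or_eq_of_map_eq hX hlaw, hY] with ω hXω ⟨hY0, hYx⟩
    rcases hXω with h | h
    · simp [h, hY0]
    · simp [h, hx, hYx.le]
  have hXY' : IndepFun X (fun ω => Y ω - x) P := hXY.comp measurable_id (measurable_sub_const x)
  have hYxint : Integrable (fun ω => Y ω - x) P := hYint.sub (integrable_const x)
  rw [integral_congr_ae hmax,
    integral_add (integrable_const x) (hYxint.indicator (hX (measurableSet_singleton 0))),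
    hXY'.integral_indicator_preimage hX hYxint (measurableSet_singleton 0),
    measureReal_preimage_zero_of_map_eq hX hp hx hlaw, integral_sub hYint (integrable_const x)]
  simp only [integral_const, probReal_univ, smul_eq_mul, one_mul]
  ring

theorem mul_add_one_sub_mul_le_add_div {E : ℝ} {n : ℕ} (hn : 0 < n) (hp : 0 ≤ p) (hp1 : p ≤ 1)
    (hx : 0 ≤ x) (hE : (1 - p ^ n) * x ≤ E) :
    p * E + (1 - p) * x ≤ E + (1 - p ^ n) * x / n := by
  have hn' : (0 : ℝ) < n := by exact_mod_cast hn
  have hpow := natCast_mul_one_sub_mul_pow_le_one_sub_pow (p := p) n hp hp1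
  have h1p : 0 ≤ 1 - p := by linarith
  calc p * E + (1 - p) * x = E + (1 - p) * (x - E) := by ring
    _ ≤ E + (1 - p) * (p ^ n * x) := by gcongr; linarith
    _ ≤ E + (1 - p ^ n) * x / n := by
        gcongr
        rw [le_div_iff₀ hn']
        nlinarith

end

theorem stmt_14_general {Ω : Type*} [MeasurableSpace Ω] (P : Measure Ω) [IsProbabilityMeasure P]
    (n : ℕ) (hn : 0 < n) (p x M : ℝ) (hp : 0 < p) (hp1 : p < 1) (hx : 0 < x)
    (X Y : Ω → ℝ) (hXmeas : Measurable X)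
    (hlaw : Measure.map X P =
      ENNReal.ofReal p • Measure.dirac 0 + ENNReal.ofReal (1 - p) • Measure.dirac x)
    (hY : ∀ᵐ ω ∂P, 0 ≤ Y ω ∧ Y ω < x)
    (hYint : Integrable Y P)
    (hindep : IndepFun X Y P)
    (hM : M = (1 - p ^ n) * x)
    (hEY : M < ∫ ω, Y ω ∂P) :
    (∫ ω, max (X ω) (Y ω) ∂P = p * ∫ ω, Y ω ∂P + (1 - p) * x) ∧
      ∫ ω, max (X ω) (Y ω) ∂P ≤ (∫ ω, Y ω ∂P) + M / n := by
  have hmax := integral_max_of_map_eq hXmeas hp.le hx.ne' hlaw hY hYint hindep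
  refine ⟨hmax, ?_⟩
  rw [hmax, hM]
  exact mul_add_one_sub_mul_le_add_div hn hp.le hp1.le hx.le (hM ▸ hEY.le)

theorem stmt_14 {Ω : Type*} [MeasurableSpace Ω] (P : Measure Ω) [IsProbabilityMeasure P]
    (n : ℕ) (hn : 0 < n) (p x M : ℝ) (hp : 0 < p) (hp1 : p < 1) (hx : 0 < x)
    (X Y : Ω → ℝ) (hXmeas : Measurable X) (hYmeas : Measurable Y)
    (hlaw : Measure.map X P =
      ENNReal.ofReal p • Measure.dirac 0 + ENNReal.ofReal (1 - p) • Measure.dirac x)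
    (hY : ∀ᵐ ω ∂P, 0 ≤ Y ω ∧ Y ω < x)
    (hYint : Integrable Y P)
    (hindep : IndepFun X Y P)
    (hM : M = (1 - p ^ n) * x)
    (hEY : M < ∫ ω, Y ω ∂P) :
    (∫ ω, max (X ω) (Y ω) ∂P = p * ∫ ω, Y ω ∂P + (1 - p) * x) ∧
      ∫ ω, max (X ω) (Y ω) ∂P ≤ (∫ ω, Y ω ∂P) + M / n :=
  stmt_14_general P n hn p x M hp hp1 hx X Y hXmeas hlaw hY hYint hindep hM hEY
end

section
/- Let X_1 and Y be independent nonnegative random variables with P(a ≤ X_1 ≤ b) = p > 0 and P(a < Y < b) = 0. Define X_2 to equal X_1 outside [a,b] and to equal the constant x = E-weighted coalescing point on {X_1 ∈ [a,b]}, where x is chosen so that E[max of n i.i.d. copies of X_2] = E[max of n i.i.d. copies of X_1]. Then a ≤ x ≤ b, x ≥ E[X_1 | a ≤ X_1 ≤ b], and E[max(X_2, Y)] ≥ E[max(X_1, Y)]. -/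
/-!
Coalescing the mass of the band `{a ≤ X₁ ≤ b}` at `x` turns the CDF `F₁` of `X₁` into a CDF `F₂`
with `F₂ ≤ F₁` before `x` and `F₁ ≤ F₂` from `x` on. By the layer-cake formula the expected
maximum of `n` i.i.d. copies is `∫₀^∞ (1 - Fⁿ)`, and `F₁ⁿ - F₂ⁿ = (F₁ - F₂) ∑ F₁ⁱ F₂ⁿ⁻¹⁻ⁱ`
where the sum is monotone in `t`; so single crossing gives `F₁ⁿ - F₂ⁿ ≤ S (F₁ - F₂)` with `S` the
value of the sum at `x`. Integrating, equality of the expected maxima yields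
`0 ≤ S (E X₂ - E X₁)`, and `S ≥ F₂(x)ⁿ⁻¹ ≥ pⁿ⁻¹ > 0`; this is `E[X₁ | band] ≤ x`.
If `x < a` (or `x > b`), then `X₂ ≤ X₁` (or `X₁ ≤ X₂`) everywhere, strictly for the maxima when
all `n` samples lie in the band, an event of probability `pⁿ > 0`; this contradicts the equality.
Finally, as `Y` avoids `(a, b)`, `max X₂ Y - max X₁ Y = (X₂ - X₁) 1{Y ≤ a}`, whose expectation
factors by independence into `(E X₂ - E X₁) P(Y ≤ a) ≥ 0`.
-/

open MeasureTheory ProbabilityTheory Set Finset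

section ExpectedMaximum

variable {Ω ι : Type*} [MeasurableSpace Ω] [Fintype ι]

lemma integrable_iSup_comp_eval [Nonempty ι] {P : Measure Ω} [IsFiniteMeasure P] {X : Ω → ℝ}
    (hX : Integrable X P) :
    Integrable (fun v : ι → Ω => ⨆ j, X (v j)) (Measure.pi fun _ => P) := by
  have h : (fun v : ι → Ω => ⨆ j, X (v j)) = univ.sup' univ_nonempty fun j v => X (v j) := by
    ext v
    rw [Finset.sup'_apply, Finset.sup'_univ_eq_ciSup]
  rw [h]
  exact Finset.sup'_induction (p := (Integrable · (Measure.pi fun _ => P))) _ _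
    (fun _ hf _ hg => hf.sup hg) fun j _ => integrable_comp_eval hX

lemma integral_iSup_pi_map {P : Measure Ω} [IsFiniteMeasure P] {X : Ω → ℝ}
    (hX : Measurable X) :
    ∫ v, (⨆ j, v j) ∂(Measure.pi fun _ : ι => P.map X) =
      ∫ v, (⨆ j, X (v j)) ∂(Measure.pi fun _ : ι => P) := by
  rw [← Measure.pi_map_pi fun _ => hX.aemeasurable, integral_map]
  · exact (measurable_pi_lambda _ fun j => hX.comp (measurable_pi_apply j)).aemeasurable
  · exact (Measurable.iSup fun j => measurable_pi_apply j).aestronglyMeasurable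

lemma integral_iSup_comp_lt [Nonempty ι] {P : Measure Ω} [IsFiniteMeasure P] {X X' : Ω → ℝ}
    (hX : Integrable X P) (hX' : Integrable X' P) (hle : ∀ ω, X ω ≤ X' ω) {A : Set Ω}
    (hA : P A ≠ 0) (hlt : ∀ ω ∈ A, ∀ ω' ∈ A, X ω < X' ω') :
    ∫ v, (⨆ j, X (v j)) ∂(Measure.pi fun _ : ι => P) <
      ∫ v, (⨆ j, X' (v j)) ∂(Measure.pi fun _ : ι => P) := by
  have hint := integrable_iSup_comp_eval (ι := ι) hX
  have hint' := integrable_iSup_comp_eval (ι := ι) hX'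
  have hmono : ∀ v : ι → Ω, ⨆ j, X (v j) ≤ ⨆ j, X' (v j) := fun v =>
    ciSup_mono (finite_range _).bddAbove fun j => hle (v j)
  refine (integral_mono hint hint' hmono).lt_of_ne fun heq => ?_
  have hae := (integral_eq_iff_of_ae_le hint hint' (.of_forall hmono)).1 heq
  have hpos : Measure.pi (fun _ : ι => P) (univ.pi fun _ => A) ≠ 0 := by
    simpa [Measure.pi_pi] using hA
  refine hpos (measure_mono_null (fun v hv => ?_) (ae_iff.1 hae))
  obtain ⟨i, hi⟩ := exists_eq_ciSup_of_finite (f := fun j => X (v j))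
  obtain ⟨j⟩ := ‹Nonempty ι›
  have := hlt _ (hv i trivial) _ (hv j trivial)
  exact ((hi ▸ this).trans_le (le_ciSup (finite_range fun j => X' (v j)).bddAbove j)).ne

end ExpectedMaximum

section LayerCake

lemma MeasureTheory.Integrable.integrableOn_Ioi_measureReal_lt {α : Type*} [MeasurableSpace α]
    {ν : Measure α} [IsFiniteMeasure ν] {g : α → ℝ} (hg : Integrable g ν) (hg0 : 0 ≤ᵐ[ν] g) :
    IntegrableOn (fun t => ν.real {a | t < g a}) (Ioi 0) := by
  have hanti : Antitone fun t => ν {a | t < g a} := fun s t hst =>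
    measure_mono fun a ha => hst.trans_lt ha
  refine ⟨hanti.measurable.ennreal_toReal.aestronglyMeasurable, ?_⟩
  rw [hasFiniteIntegral_iff_ofReal (.of_forall fun t => measureReal_nonneg)]
  simp_rw [measureReal_def, ENNReal.ofReal_toReal (measure_ne_top ν _)]
  rw [← lintegral_eq_lintegral_meas_lt ν hg0 hg.aemeasurable]
  exact hg.lintegral_lt_top

variable {ι : Type*} [Fintype ι] (μ : Measure ℝ) [IsProbabilityMeasure μ]

lemma measureReal_lt_eq_one_sub_cdf (t : ℝ) : μ.real {s | t < s} = 1 - cdf μ t := by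
  rw [cdf_eq_real, ← probReal_compl_eq_one_sub measurableSet_Iic, compl_Iic]
  rfl

lemma measureReal_pi_lt_iSup [Nonempty ι] (t : ℝ) :
    (Measure.pi fun _ : ι => μ).real {v | t < ⨆ j, v j} = 1 - cdf μ t ^ Fintype.card ι := by
  have h : {v : ι → ℝ | t < ⨆ j, v j} = (univ.pi fun _ => Iic t)ᶜ := by
    ext v
    simp only [mem_ofPred_eq, mem_compl_iff, mem_univ_pi, Set.mem_Iic, not_forall, not_le,
      lt_ciSup_iff (finite_range v).bddAbove]
  rw [h, probReal_compl_eq_one_sub (.univ_pi fun _ => measurableSet_Iic), measureReal_def,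
    Measure.pi_pi]
  simp [cdf_eq_real, measureReal_def]

variable {μ}

lemma ae_nonneg_iSup_pi [Nonempty ι] (hμ0 : ∀ᵐ s ∂μ, 0 ≤ s) :
    0 ≤ᵐ[Measure.pi fun _ : ι => μ] fun v => ⨆ j, v j := by
  obtain ⟨j⟩ := ‹Nonempty ι›
  filter_upwards [(measurePreserving_eval (fun _ : ι => μ) j).quasiMeasurePreserving.ae hμ0]
    with v hv
  exact hv.trans (le_ciSup (finite_range v).bddAbove j)

lemma integral_eq_integral_one_sub_cdf (hμ : Integrable id μ) (hμ0 : ∀ᵐ s ∂μ, 0 ≤ s) :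
    ∫ s, s ∂μ = ∫ t in Ioi 0, (1 - cdf μ t) := by
  simp_rw [← measureReal_lt_eq_one_sub_cdf]
  exact hμ.integral_eq_integral_meas_lt hμ0

lemma integrableOn_one_sub_cdf (hμ : Integrable id μ) (hμ0 : ∀ᵐ s ∂μ, 0 ≤ s) :
    IntegrableOn (fun t => 1 - cdf μ t) (Ioi 0) := by
  simpa only [id, measureReal_lt_eq_one_sub_cdf] using hμ.integrableOn_Ioi_measureReal_lt hμ0

lemma integral_iSup_pi_eq_integral_one_sub_cdf_pow [Nonempty ι] (hμ : Integrable id μ)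
    (hμ0 : ∀ᵐ s ∂μ, 0 ≤ s) :
    ∫ v, (⨆ j, v j) ∂(Measure.pi fun _ : ι => μ) =
      ∫ t in Ioi 0, (1 - cdf μ t ^ Fintype.card ι) := by
  simp_rw [← measureReal_pi_lt_iSup]
  exact (integrable_iSup_comp_eval hμ).integral_eq_integral_meas_lt (ae_nonneg_iSup_pi hμ0)

lemma integrableOn_one_sub_cdf_pow [Nonempty ι] (hμ : Integrable id μ)
    (hμ0 : ∀ᵐ s ∂μ, 0 ≤ s) :
    IntegrableOn (fun t => 1 - cdf μ t ^ Fintype.card ι) (Ioi 0) := by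
  simpa only [id, measureReal_pi_lt_iSup] using
    (integrable_iSup_comp_eval (ι := ι) hμ).integrableOn_Ioi_measureReal_lt
      (ae_nonneg_iSup_pi hμ0)

end LayerCake

section SingleCrossing

lemma geom_sum₂_le_geom_sum₂ {R : Type*} [Semiring R] [PartialOrder R] [IsOrderedRing R]
    {x y x' y' : R} (hx : 0 ≤ x) (hy : 0 ≤ y) (hxx' : x ≤ x')
    (hyy' : y ≤ y') (n : ℕ) :
    ∑ i ∈ range n, x ^ i * y ^ (n - 1 - i) ≤
      ∑ i ∈ range n, x' ^ i * y' ^ (n - 1 - i) := by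
  have := hx.trans hxx'
  gcongr

lemma pow_sub_pow_le_of_single_crossing {R α : Type*} [CommRing R] [PartialOrder R]
    [IsOrderedRing R] [LinearOrder α] {F G : α → R}
    (hF : Monotone F) (hG : Monotone G) (hF0 : ∀ t, 0 ≤ F t) (hG0 : ∀ t, 0 ≤ G t) {x : α}
    (hlt : ∀ t < x, G t ≤ F t) (hge : ∀ t, x ≤ t → F t ≤ G t) (n : ℕ) (t : α) :
    F t ^ n - G t ^ n ≤ (∑ i ∈ range n, F x ^ i * G x ^ (n - 1 - i)) * (F t - G t) := by
  rw [← geom_sum₂_mul]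
  rcases lt_or_ge t x with ht | ht
  · exact mul_le_mul_of_nonneg_right
      (geom_sum₂_le_geom_sum₂ (hF0 t) (hG0 t) (hF ht.le) (hG ht.le) n)
      (sub_nonneg.2 (hlt t ht))
  · exact mul_le_mul_of_nonpos_right
      (geom_sum₂_le_geom_sum₂ (hF0 x) (hG0 x) (hF ht) (hG ht) n) (sub_nonpos.2 (hge t ht))

end SingleCrossing

theorem integral_le_integral_of_cdf_single_crossing {ι : Type*} [Fintype ι] [Nonempty ι]
    {μ ν : Measure ℝ} [IsProbabilityMeasure μ] [IsProbabilityMeasure ν]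
    (hμ : Integrable id μ) (hν : Integrable id ν) (hμ0 : ∀ᵐ s ∂μ, 0 ≤ s)
    (hν0 : ∀ᵐ s ∂ν, 0 ≤ s) {x : ℝ} (hlt : ∀ t < x, cdf ν t ≤ cdf μ t)
    (hge : ∀ t, x ≤ t → cdf μ t ≤ cdf ν t) (hx : 0 < cdf ν x)
    (hmax : ∫ v, (⨆ j, v j) ∂(Measure.pi fun _ : ι => ν) =
      ∫ v, (⨆ j, v j) ∂(Measure.pi fun _ : ι => μ)) :
    ∫ s, s ∂μ ≤ ∫ s, s ∂ν := by
  set n := Fintype.card ι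
  set S := ∑ i ∈ range n, cdf μ x ^ i * cdf ν x ^ (n - 1 - i)
  have hS : 0 < S := by
    have hn : 0 < n := Fintype.card_pos
    calc 0 < cdf μ x ^ 0 * cdf ν x ^ (n - 1 - 0) := by simpa using pow_pos hx _
      _ ≤ S := single_le_sum (f := fun i => cdf μ x ^ i * cdf ν x ^ (n - 1 - i))
        (fun i _ => mul_nonneg (pow_nonneg (cdf_nonneg μ x) _)
          (pow_nonneg (cdf_nonneg ν x) _))
        (mem_range.2 hn)
  have hpow := integrableOn_one_sub_cdf_pow (ι := ι) hμ hμ0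
  have hpow' := integrableOn_one_sub_cdf_pow (ι := ι) hν hν0
  have key : ∫ t in Ioi 0, ((1 - cdf ν t ^ n) - (1 - cdf μ t ^ n)) ≤
      ∫ t in Ioi 0, S * ((1 - cdf ν t) - (1 - cdf μ t)) := by
    refine integral_mono (hpow'.sub hpow)
      (((integrableOn_one_sub_cdf hν hν0).sub (integrableOn_one_sub_cdf hμ hμ0)).const_mul S)
      fun t => ?_
    have := pow_sub_pow_le_of_single_crossing (cdf μ).mono (cdf ν).mono (cdf_nonneg μ)
      (cdf_nonneg ν) hlt hge n t
    linarith
  rw [integral_sub hpow' hpow, ← integral_iSup_pi_eq_integral_one_sub_cdf_pow hν hν0,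
    ← integral_iSup_pi_eq_integral_one_sub_cdf_pow hμ hμ0, hmax, sub_self, integral_const_mul,
    integral_sub (integrableOn_one_sub_cdf hν hν0) (integrableOn_one_sub_cdf hμ hμ0),
    ← integral_eq_integral_one_sub_cdf hν hν0, ← integral_eq_integral_one_sub_cdf hμ hμ0] at key
  nlinarith

section Coalescing

variable {Ω : Type*} [MeasurableSpace Ω] {P : Measure Ω} {X : Ω → ℝ} {c : ℝ → ℝ} {s : Set ℝ}
  {x : ℝ}

lemma integrable_comp_of_eqOn_const [IsFiniteMeasure P] (hX : Integrable X P)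
    (hc : Measurable c) (hc_in : ∀ u ∈ s, c u = x) (hc_out : ∀ u ∉ s, c u = u) :
    Integrable (fun ω => c (X ω)) P := by
  refine ((integrable_const |x|).add hX.abs).mono'
    (hc.comp_aemeasurable hX.aemeasurable).aestronglyMeasurable (.of_forall fun ω => ?_)
  by_cases h : X ω ∈ s
  · simp [hc_in _ h, abs_nonneg]
  · simp [hc_out _ h, abs_nonneg]

lemma cdf_map (hX : Measurable X) [IsProbabilityMeasure P] (t : ℝ) :
    cdf (P.map X) t = P.real {ω | X ω ≤ t} := by
  have := Measure.isProbabilityMeasure_map (μ := P) hX.aemeasurable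
  rw [cdf_eq_real, map_measureReal_apply hX measurableSet_Iic]
  rfl

lemma mem_Icc_of_integral_iSup_comp_eq {ι : Type*} [Fintype ι] [Nonempty ι] [IsFiniteMeasure P]
    {a b : ℝ} (hX : Integrable X P) (hcX : Integrable (fun ω => c (X ω)) P)
    (hc_in : ∀ u ∈ Icc a b, c u = x) (hc_out : ∀ u ∉ Icc a b, c u = u)
    (hA : P (X ⁻¹' Icc a b) ≠ 0)
    (hmax : ∫ v, (⨆ j, c (X (v j))) ∂(Measure.pi fun _ : ι => P) =
      ∫ v, (⨆ j, X (v j)) ∂(Measure.pi fun _ : ι => P)) :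
    x ∈ Icc a b := by
  by_contra hx
  rcases not_and_or.1 hx with hxa | hxb
  · refine (integral_iSup_comp_lt hcX hX (fun ω => ?_) hA fun ω hω ω' hω' => ?_).ne hmax
    · by_cases hu : X ω ∈ Icc a b
      · rw [hc_in _ hu]; linarith [hu.1]
      · rw [hc_out _ hu]
    · rw [hc_in _ hω]; linarith [hω'.1]
  · refine (integral_iSup_comp_lt hX hcX (fun ω => ?_) hA fun ω hω ω' hω' => ?_).ne' hmax
    · by_cases hu : X ω ∈ Icc a b
      · rw [hc_in _ hu]; linarith [hu.2]
      · rw [hc_out _ hu]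
    · rw [hc_in _ hω']; linarith [hω.2]

lemma integral_le_integral_comp_of_integral_iSup_eq {ι : Type*} [Fintype ι] [Nonempty ι]
    [IsProbabilityMeasure P] (hX : Measurable X) (hXint : Integrable X P) (hX0 : ∀ ω, 0 ≤ X ω)
    (hc : Measurable c) (hx0 : 0 ≤ x) (hc_in : ∀ u ∈ s, c u = x) (hc_out : ∀ u ∉ s, c u = u)
    (hA : P (X ⁻¹' s) ≠ 0)
    (hmax : ∫ v, (⨆ j, v j) ∂(Measure.pi fun _ : ι => P.map fun ω => c (X ω)) =
      ∫ v, (⨆ j, v j) ∂(Measure.pi fun _ : ι => P.map X)) :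
    ∫ ω, X ω ∂P ≤ ∫ ω, c (X ω) ∂P := by
  have hcX : Measurable fun ω => c (X ω) := hc.comp hX
  have := Measure.isProbabilityMeasure_map (μ := P) hX.aemeasurable
  have := Measure.isProbabilityMeasure_map (μ := P) hcX.aemeasurable
  have hc_cases : ∀ u, c u = u ∨ c u = x := fun u => by
    by_cases hu : u ∈ s
    exacts [.inr (hc_in u hu), .inl (hc_out u hu)]
  rw [← integral_map (f := fun s => s) hX.aemeasurable aestronglyMeasurable_id,
    ← integral_map (f := fun s => s) hcX.aemeasurable aestronglyMeasurable_id]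
  refine integral_le_integral_of_cdf_single_crossing (x := x)
    ((integrable_map_measure aestronglyMeasurable_id hX.aemeasurable).2 hXint)
    ((integrable_map_measure aestronglyMeasurable_id hcX.aemeasurable).2
      (integrable_comp_of_eqOn_const (X := X) hXint hc hc_in hc_out))
    ((ae_map_iff hX.aemeasurable measurableSet_Ici).2 (.of_forall hX0))
    ((ae_map_iff hcX.aemeasurable measurableSet_Ici).2 (.of_forall fun ω => ?_))
    (fun t ht => ?_) (fun t ht => ?_) ?_ hmax
  · show 0 ≤ c (X ω)
    rcases hc_cases (X ω) with h | h <;> rw [h]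
    exacts [hX0 ω, hx0]
  · rw [cdf_map hX, cdf_map hcX]
    refine measureReal_mono fun ω (hω : c (X ω) ≤ t) => ?_
    rcases hc_cases (X ω) with h | h <;> rw [h] at hω
    exacts [hω, absurd hω ht.not_ge]
  · rw [cdf_map hX, cdf_map hcX]
    refine measureReal_mono fun ω (hω : X ω ≤ t) => ?_
    show c (X ω) ≤ t
    rcases hc_cases (X ω) with h | h <;> rw [h]
    exacts [hω, ht]
  · rw [cdf_map hcX]
    exact (ENNReal.toReal_pos hA (measure_ne_top P _)).trans_le
      (measureReal_mono fun ω hω => (hc_in _ hω).le)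

lemma integral_comp_sub_integral [IsFiniteMeasure P] (hX : Measurable X) (hXint : Integrable X P)
    (hc : Measurable c) (hs : MeasurableSet s) (hc_in : ∀ u ∈ s, c u = x)
    (hc_out : ∀ u ∉ s, c u = u) :
    ∫ ω, c (X ω) ∂P - ∫ ω, X ω ∂P = P.real (X ⁻¹' s) * x - ∫ ω in X ⁻¹' s, X ω ∂P := by
  calc ∫ ω, c (X ω) ∂P - ∫ ω, X ω ∂P
      = ∫ ω, (c (X ω) - X ω) ∂P :=
        (integral_sub (integrable_comp_of_eqOn_const hXint hc hc_in hc_out) hXint).symm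
    _ = ∫ ω in X ⁻¹' s, (c (X ω) - X ω) ∂P :=
      (setIntegral_eq_integral_of_forall_compl_eq_zero fun ω (hω : X ω ∉ s) => by
        rw [hc_out _ hω, sub_self]).symm
    _ = ∫ ω in X ⁻¹' s, (x - X ω) ∂P :=
      setIntegral_congr_fun (hX hs) fun ω (hω : X ω ∈ s) => by rw [hc_in _ hω]
    _ = P.real (X ⁻¹' s) * x - ∫ ω in X ⁻¹' s, X ω ∂P := by
      rw [integral_sub (integrable_const x) hXint.integrableOn, setIntegral_const, smul_eq_mul]

lemma max_sub_max_eq_of_notMem_Ioo {a b u u' y : ℝ} (hy : y ∉ Ioo a b)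
    (hu : u' ≠ u → u ∈ Icc a b ∧ u' ∈ Icc a b) :
    max u' y - max u y = (u' - u) * (Iic a).indicator 1 y := by
  by_cases h : u' = u
  · simp [h]
  obtain ⟨⟨hau, hub⟩, ⟨hau', hub'⟩⟩ := hu h
  by_cases hya : y ≤ a
  · simp [hya, max_eq_left (hya.trans hau), max_eq_left (hya.trans hau')]
  · have hby : b ≤ y := by
      simp only [Set.mem_Ioo, not_and, not_lt] at hy
      exact hy (not_le.1 hya)
    simp [hya, max_eq_right (hub.trans hby), max_eq_right (hub'.trans hby)]

lemma integral_max_comp_sub_integral_max [IsProbabilityMeasure P] {Y : Ω → ℝ} {a b : ℝ}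
    (hXint : Integrable X P) (hY : Measurable Y) (hYint : Integrable Y P)
    (hindep : IndepFun X Y P) (hc : Measurable c) (hx : x ∈ Icc a b)
    (hc_in : ∀ u ∈ Icc a b, c u = x) (hc_out : ∀ u ∉ Icc a b, c u = u) (hYgap : ∀ᵐ ω ∂P, Y ω ∉ Ioo a b) :
    ∫ ω, max (c (X ω)) (Y ω) ∂P - ∫ ω, max (X ω) (Y ω) ∂P =
      (∫ ω, c (X ω) ∂P - ∫ ω, X ω ∂P) * P.real {ω | Y ω ≤ a} := by
  have hcX := integrable_comp_of_eqOn_const hXint hc hc_in hc_out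
  have hmoved : ∀ u, c u ≠ u → u ∈ Icc a b ∧ c u ∈ Icc a b := fun u hu => by
    by_cases h : u ∈ Icc a b
    · exact ⟨h, hc_in u h ▸ hx⟩
    · exact absurd (hc_out u h) hu
  have hind : Measurable ((Iic a).indicator (1 : ℝ → ℝ)) :=
    measurable_one.indicator measurableSet_Iic
  have hYa : ∫ ω, (Iic a).indicator 1 (Y ω) ∂P = P.real {ω | Y ω ≤ a} :=
    (integral_indicator_one (hY measurableSet_Iic)).symm ▸ rfl
  have hmaxc : Integrable (fun ω => max (c (X ω)) (Y ω)) P := hcX.sup hYint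
  have hmaxX : Integrable (fun ω => max (X ω) (Y ω)) P := hXint.sup hYint
  have hprod : ∫ ω, (c (X ω) - X ω) * (Iic a).indicator 1 (Y ω) ∂P =
      (∫ ω, (c (X ω) - X ω) ∂P) * ∫ ω, (Iic a).indicator 1 (Y ω) ∂P :=
    (hindep.comp (hc.sub measurable_id) hind).integral_fun_mul_eq_mul_integral
      (hcX.sub hXint).aestronglyMeasurable (hind.comp hY).aestronglyMeasurable
  rw [← integral_sub hmaxc hmaxX, ← integral_sub hcX hXint, ← hYa, ← hprod]
  exact integral_congr_ae (hYgap.mono fun ω hω => max_sub_max_eq_of_notMem_Ioo hω (hmoved _))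

end Coalescing

theorem stmt_16_general {Ω : Type*} [MeasurableSpace Ω] (P : Measure Ω) [IsProbabilityMeasure P]
    (n : ℕ) (hn : 0 < n) (a b : ℝ) (ha : 0 ≤ a)
    (X₁ Y : Ω → ℝ) (hX₁ : Measurable X₁) (hY : Measurable Y)
    (hX₁nonneg : ∀ ω, 0 ≤ X₁ ω)
    (hX₁int : Integrable X₁ P) (hYint : Integrable Y P)
    (hindep : IndepFun X₁ Y P)
    (p : ℝ) (hp : p = (P {ω | a ≤ X₁ ω ∧ X₁ ω ≤ b}).toReal) (hppos : 0 < p)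
    (hYgap : P {ω | a < Y ω ∧ Y ω < b} = 0)
    (x : ℝ)
    -- x is chosen so that the expected maximum of n i.i.d. copies is preserved:
    (hx : ∫ v, (⨆ j, v j)
            ∂(Measure.pi fun _ : Fin n =>
              Measure.map (fun ω => if a ≤ X₁ ω ∧ X₁ ω ≤ b then x else X₁ ω) P) =
          ∫ v, (⨆ j, v j) ∂(Measure.pi fun _ : Fin n => Measure.map X₁ P)) :
    a ≤ x ∧ x ≤ b ∧
      (∫ ω in {ω | a ≤ X₁ ω ∧ X₁ ω ≤ b}, X₁ ω ∂P) / p ≤ x ∧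
      ∫ ω, max (X₁ ω) (Y ω) ∂P ≤
        ∫ ω, max (if a ≤ X₁ ω ∧ X₁ ω ≤ b then x else X₁ ω) (Y ω) ∂P := by
  have : Nonempty (Fin n) := Fin.pos_iff_nonempty.mp hn
  set c : ℝ → ℝ := fun u => if a ≤ u ∧ u ≤ b then x else u
  have hc_in : ∀ u ∈ Icc a b, c u = x := fun u hu => if_pos hu
  have hc_out : ∀ u ∉ Icc a b, c u = u := fun u hu => if_neg hu
  have hc : Measurable c := Measurable.ite measurableSet_Icc measurable_const measurable_id
  have hband : P (X₁ ⁻¹' Icc a b) ≠ 0 := (ENNReal.toReal_pos_iff.1 (hp ▸ hppos)).1.ne'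
  have hmax : ∫ v, (⨆ j, c (X₁ (v j))) ∂(Measure.pi fun _ : Fin n => P) =
      ∫ v, (⨆ j, X₁ (v j)) ∂(Measure.pi fun _ : Fin n => P) := by
    rwa [← integral_iSup_pi_map (X := fun ω => c (X₁ ω)) (hc.comp hX₁),
      ← integral_iSup_pi_map hX₁]
  obtain ⟨hax, hxb⟩ := mem_Icc_of_integral_iSup_comp_eq hX₁int
    (integrable_comp_of_eqOn_const hX₁int hc hc_in hc_out) hc_in hc_out hband hmax
  have hmean := integral_le_integral_comp_of_integral_iSup_eq hX₁ hX₁int hX₁nonneg hc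
    (ha.trans hax) hc_in hc_out hband hx
  have hshift : ∫ ω, c (X₁ ω) ∂P - ∫ ω, X₁ ω ∂P =
      (P {ω | a ≤ X₁ ω ∧ X₁ ω ≤ b}).toReal * x - ∫ ω in {ω | a ≤ X₁ ω ∧ X₁ ω ≤ b}, X₁ ω ∂P :=
    integral_comp_sub_integral hX₁ hX₁int hc measurableSet_Icc hc_in hc_out
  have hmaxY := integral_max_comp_sub_integral_max hX₁int hY hYint hindep hc ⟨hax, hxb⟩ hc_in
    hc_out (measure_eq_zero_iff_ae_notMem.1 hYgap)
  refine ⟨hax, hxb, ?_, ?_⟩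
  · rw [div_le_iff₀ hppos, hp]
    linarith
  · have := mul_nonneg (sub_nonneg.2 hmean) (measureReal_nonneg (μ := P) (s := {ω | Y ω ≤ a}))
    linarith

theorem stmt_16 {Ω : Type*} [MeasurableSpace Ω] (P : Measure Ω) [IsProbabilityMeasure P]
    (n : ℕ) (hn : 0 < n) (a b : ℝ) (ha : 0 ≤ a) (hab : a ≤ b)
    (X₁ Y : Ω → ℝ) (hX₁ : Measurable X₁) (hY : Measurable Y)
    (hX₁nonneg : ∀ ω, 0 ≤ X₁ ω) (hYnonneg : ∀ ω, 0 ≤ Y ω)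
    (hX₁int : Integrable X₁ P) (hYint : Integrable Y P)
    (hindep : IndepFun X₁ Y P)
    (p : ℝ) (hp : p = (P {ω | a ≤ X₁ ω ∧ X₁ ω ≤ b}).toReal) (hppos : 0 < p)
    (hYgap : P {ω | a < Y ω ∧ Y ω < b} = 0)
    (x : ℝ)
    -- x is chosen so that the expected maximum of n i.i.d. copies is preserved:
    (hx : ∫ v, (⨆ j, v j)
            ∂(Measure.pi fun _ : Fin n =>
              Measure.map (fun ω => if a ≤ X₁ ω ∧ X₁ ω ≤ b then x else X₁ ω) P) =
          ∫ v, (⨆ j, v j) ∂(Measure.pi fun _ : Fin n => Measure.map X₁ P)) :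
    a ≤ x ∧ x ≤ b ∧
      (∫ ω in {ω | a ≤ X₁ ω ∧ X₁ ω ≤ b}, X₁ ω ∂P) / p ≤ x ∧
      ∫ ω, max (X₁ ω) (Y ω) ∂P ≤
        ∫ ω, max (if a ≤ X₁ ω ∧ X₁ ω ≤ b then x else X₁ ω) (Y ω) ∂P :=
  stmt_16_general P n hn a b ha X₁ Y hX₁ hY hX₁nonneg hX₁int hYint hindep p hp hppos hYgap x hx
end

section
/- Let Y be a nonnegative random variable with distribution function G, and h a differentiable real function. Then γ(u) = E[max(h(u), Y)] has right derivative γ'₊(u) = h'(u)·G(h(u)) when h'(u) ≥ 0 and γ'₊(u) = h'(u)·G⁻(h(u)) when h'(u) < 0, where G⁻ denotes the left limit of G. -/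
/-!
Write `φ x = E[max x Y]`. For each `ω`, `t ↦ max t (Y ω)` has right derivative `1{Y ω ≤ x}`
and left derivative `1{Y ω < x}` at `x`, with difference quotients bounded by `1`, so dominated
convergence gives `φ'₊(x) = G(x)` and `φ'₋(x) = G⁻(x)`. Then `γ = φ ∘ h`: if `h'(u) > 0`, `h` maps
a right neighbourhood of `u` to the right of `h u`, so the one-sided chain rule uses `φ'₊`; if
`h'(u) < 0` it maps it to the left and uses `φ'₋`. If `h'(u) = 0`, the two one-sided derivatives
give `φ y - φ (h u) = O(y - h u)`, hence `γ t - γ u = O(h t - h u) = o(t - u)`.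
-/

open MeasureTheory Filter Topology Asymptotics Set

section OneSidedChainRule

variable {f g : ℝ → ℝ} {f' g' x : ℝ}

theorem HasDerivWithinAt.eventually_self_le_of_pos (hg : HasDerivWithinAt g g' (Ici x) x)
    (hg' : 0 < g') : ∀ᶠ y in 𝓝[≥] x, g x ≤ g y := by
  have hslope := (hasDerivWithinAt_iff_tendsto_slope.1 hg).eventually (eventually_gt_nhds hg')
  rw [eventually_nhdsWithin_iff] at hslope ⊢
  filter_upwards [hslope] with y hy hxy
  rcases eq_or_ne y x with rfl | hne
  · exact le_rfl
  · exact (slope_nonneg_iff_of_le hxy).1 (hy ⟨hxy, hne⟩).le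

theorem HasDerivWithinAt.eventually_le_self_of_neg (hg : HasDerivWithinAt g g' (Ici x) x)
    (hg' : g' < 0) : ∀ᶠ y in 𝓝[≥] x, g y ≤ g x := by
  have hslope := (hasDerivWithinAt_iff_tendsto_slope.1 hg).eventually (eventually_lt_nhds hg')
  rw [eventually_nhdsWithin_iff] at hslope ⊢
  filter_upwards [hslope] with y hy hxy
  rcases eq_or_ne y x with rfl | hne
  · exact le_rfl
  · exact (slope_nonpos_iff_of_le hxy).1 (hy ⟨hxy, hne⟩).le

theorem HasDerivWithinAt.comp_Ici_of_pos (hf : HasDerivWithinAt f f' (Ici (g x)) (g x))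
    (hg : HasDerivWithinAt g g' (Ici x) x) (hg' : 0 < g') :
    HasDerivWithinAt (f ∘ g) (g' * f') (Ici x) x := by
  rw [mul_comm]
  exact HasDerivAtFilter.comp hf hg <|
    (tendsto_nhdsWithin_iff.2 ⟨hg.continuousWithinAt, hg.eventually_self_le_of_pos hg'⟩).prodMap
      (tendsto_pure_pure _ _)

theorem HasDerivWithinAt.comp_Ici_of_neg (hf : HasDerivWithinAt f f' (Iic (g x)) (g x))
    (hg : HasDerivWithinAt g g' (Ici x) x) (hg' : g' < 0) :
    HasDerivWithinAt (f ∘ g) (g' * f') (Ici x) x := by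
  rw [mul_comm]
  exact HasDerivAtFilter.comp hf hg <|
    (tendsto_nhdsWithin_iff.2 ⟨hg.continuousWithinAt, hg.eventually_le_self_of_neg hg'⟩).prodMap
      (tendsto_pure_pure _ _)

theorem isBigO_sub_of_hasDerivWithinAt_Iic_Ici {a b : ℝ}
    (hfl : HasDerivWithinAt f a (Iic x) x) (hfr : HasDerivWithinAt f b (Ici x) x) :
    (f · - f x) =O[𝓝 x] (· - x) := by
  rw [← nhdsLE_sup_nhdsGE]
  exact hfl.hasFDerivWithinAt.isBigO_sub.sup hfr.hasFDerivWithinAt.isBigO_sub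

theorem HasDerivWithinAt.comp_of_isBigO_of_deriv_eq_zero {s : Set ℝ}
    (hf : (f · - f (g x)) =O[𝓝 (g x)] (· - g x)) (hg : HasDerivWithinAt g 0 s x) :
    HasDerivWithinAt (f ∘ g) 0 s x := by
  have hg_small : (g · - g x) =o[𝓝[s] x] (· - x) := by
    simpa using hasDerivWithinAt_iff_isLittleO.1 hg
  rw [hasDerivWithinAt_iff_isLittleO]
  simpa [Function.comp_def] using (hf.comp_tendsto hg.continuousWithinAt).trans_isLittleO hg_small

end OneSidedChainRule

section IntegralOfMax

variable {Ω : Type*} [MeasurableSpace Ω] {μ : Measure Ω}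

theorem hasDerivWithinAt_integral_of_dominated_slope {F : ℝ → Ω → ℝ} {F' bound : Ω → ℝ}
    {s : Set ℝ} {x : ℝ} (hF_int : ∀ t, Integrable (F t) μ)
    (h_bound : ∀ t ω, |F t ω - F x ω| ≤ bound ω * |t - x|)
    (bound_integrable : Integrable bound μ)
    (hF' : ∀ ω, HasDerivWithinAt (F · ω) (F' ω) s x) :
    HasDerivWithinAt (fun t => ∫ ω, F t ω ∂μ) (∫ ω, F' ω ∂μ) s x := by
  have h_slope : ∀ t, slope (fun t => ∫ ω, F t ω ∂μ) x t = ∫ ω, slope (F · ω) x t ∂μ := by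
    intro t
    simp only [slope_def_field]
    rw [integral_div, integral_sub (hF_int t) (hF_int x)]
  rw [hasDerivWithinAt_iff_tendsto_slope, funext h_slope]
  refine tendsto_integral_filter_of_dominated_convergence bound ?_ ?_ bound_integrable ?_
  · refine .of_forall fun t => ?_
    simp only [slope_def_field]
    exact (((hF_int t).sub (hF_int x)).div_const _).aestronglyMeasurable
  · filter_upwards [self_mem_nhdsWithin] with t ht
    refine .of_forall fun ω => ?_
    rw [slope_def_field, Real.norm_eq_abs, abs_div,
      div_le_iff₀ (abs_pos.2 (sub_ne_zero.2 ht.2))]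
    exact h_bound t ω
  · exact .of_forall fun ω => hasDerivWithinAt_iff_tendsto_slope.1 (hF' ω)

theorem hasDerivWithinAt_max_const_Ici (x y : ℝ) :
    HasDerivWithinAt (fun t => max t y) ((Iic x).indicator 1 y) (Ici x) x := by
  by_cases hy : y ≤ x
  · rw [indicator_of_mem (mem_Iic.2 hy), Pi.one_apply]
    exact (hasDerivWithinAt_id x _).congr_of_mem (fun t ht => max_eq_left (hy.trans ht))
      self_mem_Ici
  · rw [indicator_of_notMem (notMem_Iic.2 (not_le.1 hy))]
    refine ((hasDerivAt_const x y).congr_of_eventuallyEq ?_).hasDerivWithinAt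
    filter_upwards [eventually_lt_nhds (not_le.1 hy)] with t ht
    exact max_eq_right ht.le

theorem hasDerivWithinAt_max_const_Iic (x y : ℝ) :
    HasDerivWithinAt (fun t => max t y) ((Iio x).indicator 1 y) (Iic x) x := by
  by_cases hy : y < x
  · rw [indicator_of_mem (mem_Iio.2 hy), Pi.one_apply]
    refine ((hasDerivAt_id x).congr_of_eventuallyEq ?_).hasDerivWithinAt
    filter_upwards [eventually_gt_nhds hy] with t ht
    exact max_eq_left ht.le
  · rw [indicator_of_notMem (notMem_Iio.2 (not_lt.1 hy))]
    exact (hasDerivWithinAt_const x _ y).congr_of_mem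
      (fun t ht => max_eq_right ((mem_Iic.1 ht).trans (not_lt.1 hy))) self_mem_Iic

variable [IsFiniteMeasure μ] {Y : Ω → ℝ}

theorem MeasureTheory.Integrable.const_max (hY : Integrable Y μ) (t : ℝ) :
    Integrable (fun ω => max t (Y ω)) μ :=
  (integrable_const t).sup hY

theorem hasDerivWithinAt_integral_max_of_indicator (hY : Integrable Y μ) {s A : Set ℝ} {x : ℝ}
    (hA : MeasurableSet (Y ⁻¹' A))
    (hmax : ∀ y, HasDerivWithinAt (fun t => max t y) (A.indicator 1 y) s x) :
    HasDerivWithinAt (fun t => ∫ ω, max t (Y ω) ∂μ) (μ.real (Y ⁻¹' A)) s x := by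
  have := hasDerivWithinAt_integral_of_dominated_slope hY.const_max
    (fun t ω => (abs_max_sub_max_le_abs t x (Y ω)).trans_eq (one_mul _).symm)
    (integrable_const 1) (fun ω => hmax (Y ω))
  rwa [← integral_indicator_one hA]

theorem hasDerivWithinAt_integral_max_Ici (hYmeas : Measurable Y) (hY : Integrable Y μ) (x : ℝ) :
    HasDerivWithinAt (fun t => ∫ ω, max t (Y ω) ∂μ) (μ.real {ω | Y ω ≤ x}) (Ici x) x :=
  hasDerivWithinAt_integral_max_of_indicator hY (hYmeas measurableSet_Iic)
    (hasDerivWithinAt_max_const_Ici x)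

theorem hasDerivWithinAt_integral_max_Iic (hYmeas : Measurable Y) (hY : Integrable Y μ) (x : ℝ) :
    HasDerivWithinAt (fun t => ∫ ω, max t (Y ω) ∂μ) (μ.real {ω | Y ω < x}) (Iic x) x :=
  hasDerivWithinAt_integral_max_of_indicator hY (hYmeas measurableSet_Iio)
    (hasDerivWithinAt_max_const_Iic x)

end IntegralOfMax

theorem stmt_17_general {Ω : Type*} [MeasurableSpace Ω] (P : Measure Ω) [IsProbabilityMeasure P]
    (Y : Ω → ℝ) (hYmeas : Measurable Y)
    (hYint : Integrable Y P)
    (h : ℝ → ℝ) (hh : Differentiable ℝ h) (u : ℝ) :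
    (0 ≤ deriv h u →
        HasDerivWithinAt (fun t => ∫ ω, max (h t) (Y ω) ∂P)
          (deriv h u * (P {ω | Y ω ≤ h u}).toReal) (Set.Ici u) u) ∧
      (deriv h u < 0 →
        HasDerivWithinAt (fun t => ∫ ω, max (h t) (Y ω) ∂P)
          (deriv h u * (P {ω | Y ω < h u}).toReal) (Set.Ici u) u) := by
  have hφ_Ici := hasDerivWithinAt_integral_max_Ici hYmeas hYint (h u)
  have hφ_Iic := hasDerivWithinAt_integral_max_Iic hYmeas hYint (h u)
  have hdh : HasDerivWithinAt h (deriv h u) (Ici u) u := (hh u).hasDerivAt.hasDerivWithinAt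
  refine ⟨fun hpos => ?_, fun hneg => hφ_Iic.comp_Ici_of_neg hdh hneg⟩
  rcases hpos.eq_or_lt with hzero | hpos
  · rw [← hzero, zero_mul]
    exact (hzero ▸ hdh).comp_of_isBigO_of_deriv_eq_zero
      (isBigO_sub_of_hasDerivWithinAt_Iic_Ici hφ_Iic hφ_Ici)
  · exact hφ_Ici.comp_Ici_of_pos hdh hpos

theorem stmt_17 {Ω : Type*} [MeasurableSpace Ω] (P : Measure Ω) [IsProbabilityMeasure P]
    (Y : Ω → ℝ) (hYmeas : Measurable Y) (hYnonneg : ∀ ω, 0 ≤ Y ω)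
    (hYint : Integrable Y P)
    (h : ℝ → ℝ) (hh : Differentiable ℝ h) (u : ℝ) :
    (0 ≤ deriv h u →
        HasDerivWithinAt (fun t => ∫ ω, max (h t) (Y ω) ∂P)
          (deriv h u * (P {ω | Y ω ≤ h u}).toReal) (Set.Ici u) u) ∧
      (deriv h u < 0 →
        HasDerivWithinAt (fun t => ∫ ω, max (h t) (Y ω) ∂P)
          (deriv h u * (P {ω | Y ω < h u}).toReal) (Set.Ici u) u) :=
  stmt_17_general P Y hYmeas hYint h hh u
end

section
/- Let 0 ≤ M_i ≤ b for i = 1,...,n and define p_i = (1 − M_i/b)^{1/n}, and let Y_1,...,Y_n be independent with P(Y_i = 0) = p_i, P(Y_i = b) = 1 − p_i. Then E[max of n i.i.d. copies of Y_i] = M_i for each i, and E[max(Y_1,...,Y_n)] = b·(1 − ∏_{i=1}^n p_i) = b − ∏_{i=1}^n (b − M_i)^{1/n}. -/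
open MeasureTheory ProbabilityTheory
open scoped ENNReal

/-! Almost surely every coordinate of a vector of independent `{0, b}`-valued variables is `0`
or `b`, so its maximum is `b` off the event that all coordinates vanish, an event of probability
`∏ pᵢ`. For `n` copies of `Yᵢ` this gives `b (1 - pᵢ ^ n) = Mᵢ`, and the closed form comes from
`b ∏ (1 - Mᵢ / b) ^ (1 / n) = ∏ (b - Mᵢ) ^ (1 / n)`, since there are `n` factors `b ^ (1 / n)`. -/

noncomputable def twoPoint (b q : ℝ) : Measure ℝ :=
  ENNReal.ofReal q • Measure.dirac 0 + ENNReal.ofReal (1 - q) • Measure.dirac b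

namespace twoPoint

variable {b q : ℝ}

lemma isProbabilityMeasure (hq : q ∈ Set.Icc (0 : ℝ) 1) :
    IsProbabilityMeasure (twoPoint b q) := by
  constructor
  simp only [twoPoint, Measure.add_apply, Measure.smul_apply, measure_univ, smul_eq_mul, mul_one]
  rw [← ENNReal.ofReal_add hq.1 (by linarith [hq.2]), add_sub_cancel, ENNReal.ofReal_one]

lemma apply_singleton_zero (hb : b ≠ 0) : twoPoint b q {0} = ENNReal.ofReal q := by
  simp [twoPoint, hb.symm]

lemma ae_eq_zero_or_eq : ∀ᵐ x ∂twoPoint b q, x = 0 ∨ x = b := by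
  refine ae_add_measure_iff.2 ⟨Measure.ae_smul_measure ?_ _, Measure.ae_smul_measure ?_ _⟩ <;>
    simp

end twoPoint

lemma iSup_eq_indicator_of_forall_eq_zero_or_eq {ι : Type*} [Finite ι] {b : ℝ} (hb : 0 ≤ b)
    {v : ι → ℝ} (hv : ∀ i, v i = 0 ∨ v i = b) :
    ⨆ i, v i = (Set.univ.pi fun _ => ({0} : Set ℝ))ᶜ.indicator (fun _ => b) v := by
  by_cases hzero : ∀ i, v i = 0
  · rw [Set.indicator_of_notMem (by simpa using hzero), funext hzero, Real.iSup_const_zero]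
  · push Not at hzero
    obtain ⟨j, hj⟩ := hzero
    have : Nonempty ι := ⟨j⟩
    have hvj : v j = b := (hv j).resolve_left hj
    rw [Set.indicator_of_mem (by simpa using ⟨j, hj⟩)]
    refine le_antisymm (ciSup_le fun i => ?_) (hvj ▸ le_ciSup (Set.finite_range v).bddAbove j)
    rcases hv i with h | h <;> simp [h, hb]

lemma integral_iSup_pi_twoPoint {ι : Type*} [Fintype ι] {b : ℝ} (hb : 0 < b) {q : ι → ℝ}
    (hq : ∀ i, q i ∈ Set.Icc (0 : ℝ) 1) :
    ∫ v, (⨆ i, v i) ∂Measure.pi (fun i => twoPoint b (q i)) = b * (1 - ∏ i, q i) := by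
  have := fun i => twoPoint.isProbabilityMeasure (b := b) (hq i)
  set B : Set (ι → ℝ) := Set.univ.pi fun _ => {0}
  have hB : MeasurableSet B := .univ_pi fun _ => measurableSet_singleton 0
  have hae : ∀ᵐ v ∂Measure.pi (fun i => twoPoint b (q i)), ∀ i, v i = 0 ∨ v i = b :=
    Filter.eventually_all.2 fun i =>
      (Measure.tendsto_eval_ae_ae (μ := fun i => twoPoint b (q i)) (i := i)).eventually
        twoPoint.ae_eq_zero_or_eq
  have hBreal : (Measure.pi fun i => twoPoint b (q i)).real B = ∏ i, q i := by
    simp only [B, measureReal_def, Measure.pi_pi, twoPoint.apply_singleton_zero hb.ne',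
      ENNReal.toReal_prod, ENNReal.toReal_ofReal (hq _).1]
  rw [integral_congr_ae
      (hae.mono fun v hv => iSup_eq_indicator_of_forall_eq_zero_or_eq hb.le hv),
    integral_indicator_const _ hB.compl, probReal_compl_eq_one_sub hB, hBreal, smul_eq_mul,
    mul_comm]

lemma rpow_inv_natCast_mem_Icc {x : ℝ} (hx : x ∈ Set.Icc (0 : ℝ) 1) (n : ℕ) :
    x ^ ((n : ℝ)⁻¹) ∈ Set.Icc (0 : ℝ) 1 :=
  ⟨Real.rpow_nonneg hx.1 _, Real.rpow_le_one hx.1 hx.2 (by positivity)⟩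

lemma one_sub_div_mem_Icc {M b : ℝ} (hb : 0 < b) (hM : M ∈ Set.Icc 0 b) :
    1 - M / b ∈ Set.Icc (0 : ℝ) 1 := by
  have h0 : 0 ≤ M / b := div_nonneg hM.1 hb.le
  have h1 : M / b ≤ 1 := (div_le_one hb).2 hM.2
  constructor <;> linarith

lemma mul_one_sub_prod_rpow_inv {ι : Type*} [Fintype ι] [Nonempty ι] {b : ℝ} (hb : 0 < b)
    {M : ι → ℝ} (hM : ∀ i, M i ≤ b) :
    b * (1 - ∏ i, (1 - M i / b) ^ ((Fintype.card ι : ℝ)⁻¹)) =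
      b - ∏ i, (b - M i) ^ ((Fintype.card ι : ℝ)⁻¹) := by
  have hdiv : ∀ i, (1 - M i / b) ^ ((Fintype.card ι : ℝ)⁻¹) =
      (b - M i) ^ ((Fintype.card ι : ℝ)⁻¹) / b ^ ((Fintype.card ι : ℝ)⁻¹) := fun i => by
    rw [one_sub_div hb.ne', Real.div_rpow (by linarith [hM i]) hb.le]
  rw [Finset.prod_congr rfl fun i _ => hdiv i, Finset.prod_div_distrib, Finset.prod_const,
    Finset.card_univ, Real.rpow_inv_natCast_pow hb.le Fintype.card_ne_zero]
  field_simp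

theorem stmt_18_general {Ω : Type*} [MeasurableSpace Ω] (P : Measure Ω)
    (n : ℕ) (hn : 0 < n) (b : ℝ) (hb : 0 < b)
    (M : Fin n → ℝ) (hM : ∀ i, M i ∈ Set.Icc (0 : ℝ) b)
    (p : Fin n → ℝ) (hp : ∀ i, p i = (1 - M i / b) ^ ((n : ℝ)⁻¹))
    (Y : Fin n → Ω → ℝ) (hmeas : ∀ i, Measurable (Y i))
    (hlaw : ∀ i, Measure.map (Y i) P =
      ENNReal.ofReal (p i) • Measure.dirac 0 +
        ENNReal.ofReal (1 - p i) • Measure.dirac b)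
    (hindep : iIndepFun Y P) :
    (∀ i, ∫ v, (⨆ j, v j)
        ∂(Measure.pi fun _ : Fin n => Measure.map (Y i) P) = M i) ∧
      ∫ ω, ⨆ i, Y i ω ∂P = b * (1 - ∏ i, p i) ∧
      b * (1 - ∏ i, p i) = b - ∏ i, (b - M i) ^ ((n : ℝ)⁻¹) := by
  have hlaw_twoPoint : ∀ i, Measure.map (Y i) P = twoPoint b (p i) := hlaw
  have hp01 : ∀ i, p i ∈ Set.Icc (0 : ℝ) 1 := fun i =>
    hp i ▸ rpow_inv_natCast_mem_Icc (one_sub_div_mem_Icc hb (hM i)) n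
  refine ⟨fun i => ?_, ?_, ?_⟩
  · have hpow : p i ^ n = 1 - M i / b := by
      rw [hp i, Real.rpow_inv_natCast_pow (one_sub_div_mem_Icc hb (hM i)).1 hn.ne']
    simp only [hlaw_twoPoint i, integral_iSup_pi_twoPoint hb fun _ => hp01 i, Finset.prod_const,
      Finset.card_univ, Fintype.card_fin, hpow]
    field_simp
    ring
  · have hjoint := hindep.map_fun_eq_pi_map fun i => (hmeas i).aemeasurable
    rw [← integral_map (measurable_pi_lambda _ hmeas).aemeasurable
      (Measurable.iSup measurable_pi_apply).aestronglyMeasurable, hjoint]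
    simp only [hlaw_twoPoint]
    exact integral_iSup_pi_twoPoint hb hp01
  · have : Nonempty (Fin n) := ⟨⟨0, hn⟩⟩
    simpa only [hp, Fintype.card_fin] using
      mul_one_sub_prod_rpow_inv (ι := Fin n) hb fun i => (hM i).2

theorem stmt_18 {Ω : Type*} [MeasurableSpace Ω] (P : Measure Ω) [IsProbabilityMeasure P]
    (n : ℕ) (hn : 0 < n) (b : ℝ) (hb : 0 < b)
    (M : Fin n → ℝ) (hM : ∀ i, M i ∈ Set.Icc (0 : ℝ) b)
    (p : Fin n → ℝ) (hp : ∀ i, p i = (1 - M i / b) ^ ((n : ℝ)⁻¹))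
    (Y : Fin n → Ω → ℝ) (hmeas : ∀ i, Measurable (Y i))
    (hlaw : ∀ i, Measure.map (Y i) P =
      ENNReal.ofReal (p i) • Measure.dirac 0 +
        ENNReal.ofReal (1 - p i) • Measure.dirac b)
    (hindep : iIndepFun Y P) :
    (∀ i, ∫ v, (⨆ j, v j)
        ∂(Measure.pi fun _ : Fin n => Measure.map (Y i) P) = M i) ∧
      ∫ ω, ⨆ i, Y i ω ∂P = b * (1 - ∏ i, p i) ∧
      b * (1 - ∏ i, p i) = b - ∏ i, (b - M i) ^ ((n : ℝ)⁻¹) :=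
  stmt_18_general P n hn b hb M hM p hp Y hmeas hlaw hindep
end
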